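/- arXiv:1105.5488 — 10 statements merged into one kernel-verified Lean document; each statement's English description precedes it below -/
import Mathlib

section
/- Under uniform independence sampling of a finite graph with at least one edge, the degree-based relative volume estimator is consistent: for any subset A of the vertex set V, the sequence of random variables (Σ_{i=1}^{n} deg(X_i)·1{X_i ∈ A}) / (Σ_{i=1}^{n} deg(X_i)) converges in probability to f^vol_A = vol(A)/vol(V) as the sample size n → ∞. -/
open MeasureTheory ProbabilityTheory Filter Finset
open scoped Topology

private lemma div_div_same_aux (a b c : ℝ) (hc : c ≠ 0) : (a / c) / (b / c) = a / b := by
  rcases eq_or_ne b 0 with rfl | hb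
  · simp
  · field_simp

private lemma slln_aux
    {V : Type*} [Fintype V] [Nonempty V] [DecidableEq V]
    [MeasurableSpace V] [MeasurableSingletonClass V]
    {Ω : Type*} [MeasurableSpace Ω] (μ : Measure Ω) [IsProbabilityMeasure μ]
    (X : ℕ → Ω → V)
    (hmeas : ∀ i, Measurable (X i))
    (hindep : iIndepFun X μ)
    (hunif : ∀ i v, μ {ω | X i ω = v} = (Fintype.card V : ENNReal)⁻¹)
    (φ : V → ℝ) :
    ∀ᵐ ω ∂μ, Tendsto (fun n : ℕ => (∑ i ∈ range n, φ (X i ω)) / n) atTop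
      (𝓝 ((∑ v, φ v) / (Fintype.card V : ℝ))) := by
  have hφ : Measurable φ := measurable_of_countable φ
  have hmap : ∀ i, Measure.map (X i) μ = Measure.map (X 0) μ := by
    intro i
    refine MeasureTheory.Measure.ext_of_singleton (fun v => ?_)
    rw [Measure.map_apply (hmeas i) (measurableSet_singleton v),
        Measure.map_apply (hmeas 0) (measurableSet_singleton v)]
    have h1 : (X i) ⁻¹' {v} = {ω | X i ω = v} := rfl
    have h2 : (X 0) ⁻¹' {v} = {ω | X 0 ω = v} := rfl
    rw [h1, h2, hunif i v, hunif 0 v]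
  have hident : ∀ i, IdentDistrib (φ ∘ X i) (φ ∘ X 0) μ μ := by
    intro i
    exact IdentDistrib.comp ⟨(hmeas i).aemeasurable, (hmeas 0).aemeasurable, hmap i⟩ hφ
  have hpair : Pairwise (Function.onFun (IndepFun · · μ) (fun i => φ ∘ X i)) := by
    intro i j hij
    exact (hindep.indepFun hij).comp hφ hφ
  have hmeasY : Measurable (φ ∘ X 0) := hφ.comp (hmeas 0)
  have hint : Integrable (φ ∘ X 0) μ := by
    refine Integrable.mono' (integrable_const (∑ v, |φ v|)) hmeasY.aestronglyMeasurable
      (ae_of_all _ fun ω => ?_)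
    calc ‖(φ ∘ X 0) ω‖ = |φ (X 0 ω)| := by rfl
    _ ≤ ∑ v, |φ v| :=
        Finset.single_le_sum (fun v _ => abs_nonneg (φ v)) (Finset.mem_univ (X 0 ω))
  have hexp : μ[φ ∘ X 0] = (∑ v, φ v) / (Fintype.card V : ℝ) := by
    have h1 : μ[φ ∘ X 0] = ∫ v, φ v ∂(Measure.map (X 0) μ) :=
      (integral_map (hmeas 0).aemeasurable hφ.aestronglyMeasurable).symm
    haveI : IsProbabilityMeasure (Measure.map (X 0) μ) :=
      Measure.isProbabilityMeasure_map (hmeas 0).aemeasurable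
    rw [h1, integral_fintype (.of_finite)]
    have hsing : ∀ v : V, (Measure.map (X 0) μ) {v} = (Fintype.card V : ENNReal)⁻¹ := by
      intro v
      rw [Measure.map_apply (hmeas 0) (measurableSet_singleton v)]
      exact hunif 0 v
    simp only [Measure.real, hsing, smul_eq_mul]
    rw [← Finset.mul_sum, ENNReal.toReal_inv]
    simp [div_eq_mul_inv, mul_comm]
  have := strong_law_ae_real (fun i => φ ∘ X i) hint hpair hident
  rw [hexp] at this
  exact this

theorem uis_degree_relative_volume_consistent
    {V : Type*} [Fintype V] [Nonempty V] [DecidableEq V]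
    [MeasurableSpace V] [MeasurableSingletonClass V]
    (G : SimpleGraph V) [DecidableRel G.Adj]
    {Ω : Type*} [MeasurableSpace Ω] (μ : Measure Ω) [IsProbabilityMeasure μ]
    (X : ℕ → Ω → V)
    (hmeas : ∀ i, Measurable (X i))
    (hindep : iIndepFun X μ)
    (hunif : ∀ i v, μ {ω | X i ω = v} = (Fintype.card V : ENNReal)⁻¹)
    (hE : G.edgeFinset.Nonempty) (A : Finset V) :
    ∀ ε > (0 : ℝ),
      Tendsto
        (fun n => μ {ω |
          ε < |(∑ i ∈ Finset.range n, if X i ω ∈ A then (G.degree (X i ω) : ℝ) else 0)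
                / (∑ i ∈ Finset.range n, (G.degree (X i ω) : ℝ))
              - ((∑ v ∈ A, (G.degree v : ℝ)) / (∑ v, (G.degree v : ℝ)))|})
        atTop (𝓝 0) := by
  set f : V → ℝ := fun v => if v ∈ A then (G.degree v : ℝ) else 0 with hf_def
  set g : V → ℝ := fun v => (G.degree v : ℝ) with hg_def
  set c : ℝ := (∑ v ∈ A, (G.degree v : ℝ)) / (∑ v, (G.degree v : ℝ)) with hc_def
  set N : ℝ := (Fintype.card V : ℝ) with hN_def
  have hN : 0 < N := by positivity
  -- positivity of the total degree sum
  have hg_pos : 0 < ∑ v, g v := by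
    have h2 : ∑ v, G.degree v = 2 * G.edgeFinset.card := G.sum_degrees_eq_twice_card_edges
    have : 0 < ∑ v, G.degree v := by
      rw [h2]
      have := Finset.card_pos.mpr hE
      omega
    have : (0 : ℝ) < (∑ v, (G.degree v : ℕ) : ℝ) := by exact_mod_cast this
    simpa [hg_def] using this
  have hmg_ne : (∑ v, g v) / N ≠ 0 := by positivity
  -- sum over A rewritten
  have hfA : ∑ v, f v = ∑ v ∈ A, (G.degree v : ℝ) := by
    rw [hf_def]
    rw [Finset.sum_ite_mem, Finset.univ_inter]
  have hc_eq : ((∑ v, f v) / N) / ((∑ v, g v) / N) = c := by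
    rw [div_div_same_aux _ _ _ (ne_of_gt hN), hfA]
  -- a.s. convergence of the ratio
  have hae : ∀ᵐ ω ∂μ, Tendsto (fun n : ℕ =>
      (∑ i ∈ range n, f (X i ω)) / (∑ i ∈ range n, g (X i ω))) atTop (𝓝 c) := by
    filter_upwards [slln_aux μ X hmeas hindep hunif f, slln_aux μ X hmeas hindep hunif g]
      with ω hfω hgω
    have hdiv := (hfω.div hgω hmg_ne)
    rw [hc_eq] at hdiv
    refine hdiv.congr' ?_
    filter_upwards [eventually_ge_atTop 1] with n hn
    exact div_div_same_aux _ _ _ (by exact_mod_cast Nat.one_le_iff_ne_zero.mp hn)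
  -- measurability of the ratio
  have hFmeas : ∀ n : ℕ, Measurable (fun ω =>
      (∑ i ∈ range n, f (X i ω)) / (∑ i ∈ range n, g (X i ω))) := by
    intro n
    exact (Finset.measurable_sum _ fun i _ =>
        (measurable_of_countable f).comp (hmeas i)).div
      (Finset.measurable_sum _ fun i _ => (measurable_of_countable g).comp (hmeas i))
  have htm : TendstoInMeasure μ (fun n ω =>
      (∑ i ∈ range n, f (X i ω)) / (∑ i ∈ range n, g (X i ω))) atTop (fun _ => c) :=
    tendstoInMeasure_of_tendsto_ae (fun n => (hFmeas n).aestronglyMeasurable) hae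
  intro ε hε
  have h := tendstoInMeasure_iff_dist.mp htm ε hε
  refine tendsto_of_tendsto_of_tendsto_of_le_of_le tendsto_const_nhds h
    (fun n => zero_le) (fun n => measure_mono ?_)
  intro ω hω
  simp only [Set.mem_setOf_eq] at hω ⊢
  rw [Real.dist_eq]
  exact le_of_lt hω
end

section
/- Under uniform independence sampling of a finite graph with at least one edge, the star-sampling relative volume estimator is consistent: for any subset A of the vertex set V, the sequence of random variables (Σ_{i=1}^{n} |N(X_i) ∩ A|) / (Σ_{i=1}^{n} deg(X_i)), where |N(X_i) ∩ A| is the number of neighbors of X_i that lie in A, converges in probability to f^vol_A = vol(A)/vol(V) as the sample size n → ∞. -/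
open MeasureTheory ProbabilityTheory Filter Finset
open scoped Topology

theorem uis_star_relative_volume_consistent
    {V : Type*} [Fintype V] [Nonempty V] [DecidableEq V]
    [MeasurableSpace V] [MeasurableSingletonClass V]
    (G : SimpleGraph V) [DecidableRel G.Adj]
    {Ω : Type*} [MeasurableSpace Ω] (μ : Measure Ω) [IsProbabilityMeasure μ]
    (X : ℕ → Ω → V)
    (hmeas : ∀ i, Measurable (X i))
    (hindep : iIndepFun X μ)
    (hunif : ∀ i v, μ {ω | X i ω = v} = (Fintype.card V : ENNReal)⁻¹)
    (hE : G.edgeFinset.Nonempty) (A : Finset V) :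
    ∀ ε > (0 : ℝ),
      Tendsto
        (fun n => μ {ω |
          ε < |(∑ i ∈ Finset.range n, ((G.neighborFinset (X i ω) ∩ A).card : ℝ))
                / (∑ i ∈ Finset.range n, (G.degree (X i ω) : ℝ))
              - ((∑ v ∈ A, (G.degree v : ℝ)) / (∑ v, (G.degree v : ℝ)))|})
        atTop (𝓝 0) := by
  classical
  intro ε hε
  set f : V → ℝ := fun v => ((G.neighborFinset v ∩ A).card : ℝ) with hf
  set g : V → ℝ := fun v => (G.degree v : ℝ) with hg
  have hcard_pos : (0 : ℝ) < Fintype.card V := by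
    exact_mod_cast Fintype.card_pos
  -- key combinatorial identity
  have hkey : ∑ v, f v = ∑ v ∈ A, (G.degree v : ℝ) := by
    have : ∀ v : V, (G.neighborFinset v ∩ A).card
        = ∑ a ∈ A, (if G.Adj v a then 1 else 0) := by
      intro v
      rw [Finset.inter_comm, ← Finset.filter_mem_eq_inter, Finset.card_filter]
      simp [SimpleGraph.mem_neighborFinset]
    push_cast [hf]
    simp only [this]
    push_cast
    rw [Finset.sum_comm]
    refine Finset.sum_congr rfl fun a _ => ?_
    have : (G.degree a : ℝ) = ∑ v : V, (if G.Adj a v then 1 else 0) := by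
      rw [← SimpleGraph.card_neighborFinset_eq_degree,
        SimpleGraph.neighborFinset_eq_filter, Finset.card_filter]
      push_cast
      rfl
    rw [this]
    refine Finset.sum_congr rfl fun v _ => ?_
    simp [G.adj_comm]
  have hdegsum_pos : (0 : ℝ) < ∑ v, g v := by
    obtain ⟨e, he⟩ := hE
    rw [SimpleGraph.mem_edgeFinset] at he
    induction e with
    | _ a b =>
      have hab : G.Adj a b := he
      have : 0 < G.degree a := by
        rw [SimpleGraph.degree_pos_iff_exists_adj]; exact ⟨b, hab⟩
      refine Finset.sum_pos' (fun v _ => by positivity) ⟨a, Finset.mem_univ a, ?_⟩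
      simpa [hg] using this
  -- identical distribution via uniform law
  have hmap : ∀ i, Measure.map (X i) μ = Measure.map (X 0) μ := by
    intro i
    rw [MeasureTheory.Measure.ext_iff_singleton]
    intro v
    rw [Measure.map_apply (hmeas i) (measurableSet_singleton v),
      Measure.map_apply (hmeas 0) (measurableSet_singleton v)]
    have h1 := hunif i v
    have h2 := hunif 0 v
    simp only [Set.preimage, Set.mem_singleton_iff]
    exact h1.trans h2.symm
  have hmeasf : Measurable f := measurable_of_countable f
  have hmeasg : Measurable g := measurable_of_countable g
  have hident : ∀ (h : V → ℝ), Measurable h →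
      ∀ i, IdentDistrib (h ∘ X i) (h ∘ X 0) μ μ := by
    intro h hh i
    have : IdentDistrib (X i) (X 0) μ μ :=
      ⟨(hmeas i).aemeasurable, (hmeas 0).aemeasurable, hmap i⟩
    exact this.comp hh
  have hint : ∀ (h : V → ℝ), Measurable h → Integrable (h ∘ X 0) μ := by
    intro h hh
    refine ⟨(hh.comp (hmeas 0)).aestronglyMeasurable, ?_⟩
    refine MeasureTheory.HasFiniteIntegral.of_bounded
      (C := ∑ v, |h v|) (Filter.Eventually.of_forall fun ω => ?_)
    calc ‖h (X 0 ω)‖ = |h (X 0 ω)| := rfl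
      _ ≤ ∑ v, |h v| := Finset.single_le_sum (f := fun v => |h v|)
          (fun v _ => abs_nonneg _) (Finset.mem_univ _)
  -- expectation computation
  have hexp : ∀ (h : V → ℝ), Measurable h →
      ∫ ω, h (X 0 ω) ∂μ = (Fintype.card V : ℝ)⁻¹ * ∑ v, h v := by
    intro h hh
    rw [← MeasureTheory.integral_map (hmeas 0).aemeasurable hh.aestronglyMeasurable]
    rw [MeasureTheory.integral_fintype]
    · rw [Finset.mul_sum]
      refine Finset.sum_congr rfl fun v _ => ?_
      rw [map_measureReal_apply (hmeas 0) (measurableSet_singleton v), Measure.real]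
      have := hunif 0 v
      rw [show (X 0) ⁻¹' {v} = {ω | X 0 ω = v} by rfl, this]
      rw [smul_eq_mul]
      congr 1
      simp [ENNReal.toReal_inv]
    · rw [integrable_map_measure hh.aestronglyMeasurable (hmeas 0).aemeasurable]
      exact hint h hh
  -- strong law for both sequences
  have hpair : ∀ (h : V → ℝ), Measurable h →
      Pairwise (Function.onFun (IndepFun · · μ) (fun i => h ∘ X i)) := by
    intro h hh i j hij
    exact (hindep.indepFun hij).comp hh hh
  have hY := ProbabilityTheory.strong_law_ae_real (fun i => f ∘ X i)
    (hint f hmeasf) (hpair f hmeasf) (hident f hmeasf)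
  have hZ := ProbabilityTheory.strong_law_ae_real (fun i => g ∘ X i)
    (hint g hmeasg) (hpair g hmeasg) (hident g hmeasg)
  have hEf : (μ[f ∘ X 0]) = (Fintype.card V : ℝ)⁻¹ * ∑ v, f v := hexp f hmeasf
  have hEg : (μ[g ∘ X 0]) = (Fintype.card V : ℝ)⁻¹ * ∑ v, g v := hexp g hmeasg
  set c : ℝ := (∑ v ∈ A, (G.degree v : ℝ)) / (∑ v, (G.degree v : ℝ)) with hc
  -- a.e. convergence of the ratio
  have hae : ∀ᵐ ω ∂μ, Tendsto (fun n =>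
      (∑ i ∈ Finset.range n, f (X i ω)) / (∑ i ∈ Finset.range n, g (X i ω)))
      atTop (𝓝 c) := by
    filter_upwards [hY, hZ] with ω hYω hZω
    have hlim : Tendsto (fun n : ℕ =>
        ((∑ i ∈ Finset.range n, f (X i ω)) / n) /
        ((∑ i ∈ Finset.range n, g (X i ω)) / n)) atTop
        (𝓝 ((μ[f ∘ X 0]) / (μ[g ∘ X 0]))) := by
      refine hYω.div hZω ?_
      rw [hEg]
      positivity
    have heq : ∀ᶠ n : ℕ in atTop,
        ((∑ i ∈ Finset.range n, f (X i ω)) / n) /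
        ((∑ i ∈ Finset.range n, g (X i ω)) / n)
        = (∑ i ∈ Finset.range n, f (X i ω)) / (∑ i ∈ Finset.range n, g (X i ω)) := by
      filter_upwards [eventually_gt_atTop 0] with n hn
      have hn' : (n : ℝ) ≠ 0 := by positivity
      rw [div_div_div_cancel_right₀ hn']
    have hval : (μ[f ∘ X 0]) / (μ[g ∘ X 0]) = c := by
      rw [hEf, hEg, hc]
      rw [mul_div_mul_left _ _ (by positivity : (Fintype.card V : ℝ)⁻¹ ≠ 0), hkey]
    rw [hval] at hlim
    exact hlim.congr' heq
  -- convergence in measure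
  have hmeasR : ∀ n : ℕ, AEStronglyMeasurable (fun ω =>
      (∑ i ∈ Finset.range n, f (X i ω)) / (∑ i ∈ Finset.range n, g (X i ω))) μ := by
    intro n
    refine Measurable.aestronglyMeasurable (Measurable.div ?_ ?_)
    · exact Finset.measurable_sum _ fun i _ => hmeasf.comp (hmeas i)
    · exact Finset.measurable_sum _ fun i _ => hmeasg.comp (hmeas i)
  have hTIM : TendstoInMeasure μ (fun n ω =>
      (∑ i ∈ Finset.range n, f (X i ω)) / (∑ i ∈ Finset.range n, g (X i ω)))
      atTop (fun _ => c) :=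
    tendstoInMeasure_of_tendsto_ae hmeasR hae
  have h2 := hTIM (ENNReal.ofReal ε) (by simpa using hε)
  refine tendsto_of_tendsto_of_tendsto_of_le_of_le tendsto_const_nhds h2
    (fun n => bot_le) (fun n => measure_mono ?_)
  intro ω hω
  simp only [Set.mem_setOf_eq] at hω ⊢
  rw [edist_dist, Real.dist_eq]
  exact ENNReal.ofReal_le_ofReal (le_of_lt hω)
end

section
/- Under uniform independence sampling of a finite graph, the star-sampling category size estimator is consistent: for any subset A of the vertex set V with vol(A) > 0, the sequence of random variables N · f̂^vol_A(n) · k̂_V(n) / k̂_A(n), where f̂^vol_A(n) = (Σ_{i=1}^{n} |N(X_i) ∩ A|)/(Σ_{i=1}^{n} deg(X_i)), k̂_V(n) = (1/n)·Σ_{i=1}^{n} deg(X_i), and k̂_A(n) = (Σ_{i ≤ n, X_i ∈ A} deg(X_i))/|S_A(n)|, converges in probability to |A| as the sample size n → ∞. -/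
open MeasureTheory ProbabilityTheory Filter Finset
open scoped Topology

lemma uis_lln
    {V : Type*} [Fintype V] [Nonempty V]
    [MeasurableSpace V] [MeasurableSingletonClass V]
    {Ω : Type*} [MeasurableSpace Ω] (μ : Measure Ω) [IsProbabilityMeasure μ]
    (X : ℕ → Ω → V)
    (hmeas : ∀ i, Measurable (X i))
    (hindep : iIndepFun X μ)
    (hunif : ∀ i v, μ {ω | X i ω = v} = (Fintype.card V : ENNReal)⁻¹)
    (f : V → ℝ) :
    ∀ᵐ ω ∂μ, Tendsto (fun n : ℕ => (∑ i ∈ Finset.range n, f (X i ω)) / n) atTop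
      (𝓝 ((∑ v, f v) / Fintype.card V)) := by
  have hf : Measurable f := measurable_of_finite f
  have hmap : ∀ i, Measure.map (X i) μ = Measure.map (X 0) μ := by
    intro i
    apply Measure.ext_of_singleton
    intro v
    rw [Measure.map_apply (hmeas i) (measurableSet_singleton v),
        Measure.map_apply (hmeas 0) (measurableSet_singleton v)]
    show μ {ω | X i ω = v} = μ {ω | X 0 ω = v}
    rw [hunif, hunif]
  have hident : ∀ i, IdentDistrib (fun ω => f (X i ω)) (fun ω => f (X 0 ω)) μ μ :=
    fun i => IdentDistrib.comp ⟨(hmeas i).aemeasurable, (hmeas 0).aemeasurable, hmap i⟩ hf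
  have hint : Integrable (fun ω => f (X 0 ω)) μ :=
    ⟨(hf.comp (hmeas 0)).aestronglyMeasurable,
      HasFiniteIntegral.of_bounded (C := ∑ v, ‖f v‖) (ae_of_all _ fun ω =>
        Finset.single_le_sum (f := fun v => ‖f v‖) (fun v _ => norm_nonneg _)
          (Finset.mem_univ _))⟩
  have hpair : Pairwise (Function.onFun (IndepFun · · μ) (fun i ω => f (X i ω))) :=
    fun i j hij => (hindep.indepFun hij).comp hf hf
  have hexp : μ[fun ω => f (X 0 ω)] = (∑ v, f v) / Fintype.card V := by
    have : μ[fun ω => f (X 0 ω)] = ∫ v, f v ∂(Measure.map (X 0) μ) :=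
      (integral_map (hmeas 0).aemeasurable hf.aestronglyMeasurable).symm
    rw [this]
    haveI : IsProbabilityMeasure (Measure.map (X 0) μ) :=
      Measure.isProbabilityMeasure_map (hmeas 0).aemeasurable
    rw [integral_fintype (Integrable.of_finite)]
    have hv : ∀ v : V, (Measure.map (X 0) μ) {v} = (Fintype.card V : ENNReal)⁻¹ := by
      intro v
      rw [Measure.map_apply (hmeas 0) (measurableSet_singleton v)]
      exact hunif 0 v
    simp only [measureReal_def, hv, smul_eq_mul]
    rw [Finset.sum_div, ENNReal.toReal_inv]
    congr 1
    ext v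
    rw [ENNReal.toReal_natCast, inv_mul_eq_div]
  have := strong_law_ae_real (fun i ω => f (X i ω)) hint hpair hident
  rw [hexp] at this
  exact this

theorem uis_star_category_size_consistent
    {V : Type*} [Fintype V] [Nonempty V] [DecidableEq V]
    [MeasurableSpace V] [MeasurableSingletonClass V]
    (G : SimpleGraph V) [DecidableRel G.Adj]
    {Ω : Type*} [MeasurableSpace Ω] (μ : Measure Ω) [IsProbabilityMeasure μ]
    (X : ℕ → Ω → V)
    (hmeas : ∀ i, Measurable (X i))
    (hindep : iIndepFun X μ)
    (hunif : ∀ i v, μ {ω | X i ω = v} = (Fintype.card V : ENNReal)⁻¹)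
    (A : Finset V) (hA : 0 < ∑ v ∈ A, G.degree v) :
    ∀ ε > (0 : ℝ),
      Tendsto
        (fun n => μ {ω |
          ε < |(Fintype.card V : ℝ) * ((∑ i ∈ Finset.range n, ((G.neighborFinset (X i ω) ∩ A).card : ℝ))
                  / (∑ i ∈ Finset.range n, (G.degree (X i ω) : ℝ)))
                * ((1 / (n : ℝ)) * ∑ i ∈ Finset.range n, (G.degree (X i ω) : ℝ))
                / ((∑ i ∈ (Finset.range n).filter (fun i => X i ω ∈ A), (G.degree (X i ω) : ℝ))
                  / (((Finset.range n).filter (fun i => X i ω ∈ A)).card : ℝ))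
              - ((A.card : ℝ))|})
        atTop (𝓝 0) := by
  intro ε hε
  classical
  set f1 : V → ℝ := fun v => ((G.neighborFinset v ∩ A).card : ℝ) with hf1def
  set f2 : V → ℝ := fun v => (G.degree v : ℝ) with hf2def
  set f3 : V → ℝ := fun v => if v ∈ A then (G.degree v : ℝ) else 0 with hf3def
  set f4 : V → ℝ := fun v => if v ∈ A then (1 : ℝ) else 0 with hf4def
  set F : ℕ → Ω → ℝ := fun n ω =>
    (Fintype.card V : ℝ) * ((∑ i ∈ Finset.range n, f1 (X i ω))
        / (∑ i ∈ Finset.range n, f2 (X i ω)))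
      * ((1 / (n : ℝ)) * ∑ i ∈ Finset.range n, f2 (X i ω))
      / ((∑ i ∈ Finset.range n, f3 (X i ω)) / (∑ i ∈ Finset.range n, f4 (X i ω))) with hFdef
  -- rewriting of the original expression
  have hF : ∀ n ω,
      (Fintype.card V : ℝ) * ((∑ i ∈ Finset.range n, ((G.neighborFinset (X i ω) ∩ A).card : ℝ))
          / (∑ i ∈ Finset.range n, (G.degree (X i ω) : ℝ)))
        * ((1 / (n : ℝ)) * ∑ i ∈ Finset.range n, (G.degree (X i ω) : ℝ))
        / ((∑ i ∈ (Finset.range n).filter (fun i => X i ω ∈ A), (G.degree (X i ω) : ℝ))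
          / (((Finset.range n).filter (fun i => X i ω ∈ A)).card : ℝ)) = F n ω := by
    intro n ω
    simp only [hFdef, hf1def, hf2def, hf3def, hf4def, Finset.sum_filter,
      Finset.card_filter, Nat.cast_sum, Nat.cast_ite, Nat.cast_one, Nat.cast_zero]
  -- sum identities
  have key1 : ∑ v : V, (G.neighborFinset v ∩ A).card = ∑ a ∈ A, G.degree a := by
    have h1 : ∀ v : V, (G.neighborFinset v ∩ A).card
        = ∑ a ∈ A, if G.Adj v a then 1 else 0 := by
      intro v
      rw [Finset.inter_comm, ← Finset.filter_mem_eq_inter, Finset.card_filter]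
      exact Finset.sum_congr rfl fun a _ => by simp [SimpleGraph.mem_neighborFinset]
    simp_rw [h1]
    rw [Finset.sum_comm]
    refine Finset.sum_congr rfl fun a _ => ?_
    rw [← Finset.card_filter]
    rw [SimpleGraph.degree]
    congr 1
    ext v
    simp [SimpleGraph.mem_neighborFinset, G.adj_comm]
  have kS1 : ∑ v : V, f1 v = ∑ a ∈ A, (G.degree a : ℝ) := by
    simp only [hf1def]
    rw [← Nat.cast_sum, key1, Nat.cast_sum]
  have kS3 : ∑ v : V, f3 v = ∑ a ∈ A, (G.degree a : ℝ) := by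
    simp only [hf3def]
    rw [Finset.sum_ite_mem, Finset.univ_inter]
  have kS4 : ∑ v : V, f4 v = (A.card : ℝ) := by
    simp only [hf4def]
    rw [Finset.sum_ite_mem, Finset.univ_inter, Finset.sum_const, nsmul_eq_mul, mul_one]
  have hvolA : (0 : ℝ) < ∑ a ∈ A, (G.degree a : ℝ) := by
    rw [← Nat.cast_sum]
    exact_mod_cast hA
  have hS1 : (0 : ℝ) < ∑ v : V, f1 v := kS1 ▸ hvolA
  have hS3 : (0 : ℝ) < ∑ v : V, f3 v := kS3 ▸ hvolA
  have hS2 : (0 : ℝ) < ∑ v : V, f2 v := by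
    refine lt_of_lt_of_le hvolA ?_
    exact Finset.sum_le_sum_of_subset_of_nonneg (Finset.subset_univ A)
      (fun v _ _ => by positivity)
  have hAne : A.Nonempty := by
    rcases Finset.eq_empty_or_nonempty A with h | h
    · simp [h] at hA
    · exact h
  have hS4 : (0 : ℝ) < ∑ v : V, f4 v := by
    rw [kS4]; exact_mod_cast Finset.card_pos.mpr hAne
  have hN : (0 : ℝ) < (Fintype.card V : ℝ) := by exact_mod_cast Fintype.card_pos
  -- a.e. convergence of F to |A|
  have key : ∀ᵐ ω ∂μ, Tendsto (fun n => F n ω) atTop (𝓝 (A.card : ℝ)) := by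
    filter_upwards [uis_lln μ X hmeas hindep hunif f1, uis_lln μ X hmeas hindep hunif f2,
      uis_lln μ X hmeas hindep hunif f3, uis_lln μ X hmeas hindep hunif f4]
      with ω hω1 hω2 hω3 hω4
    have hL2 : (0 : ℝ) < (∑ v : V, f2 v) / (Fintype.card V : ℝ) := div_pos hS2 hN
    have hL3 : (0 : ℝ) < (∑ v : V, f3 v) / (Fintype.card V : ℝ) := div_pos hS3 hN
    have hL4 : (0 : ℝ) < (∑ v : V, f4 v) / (Fintype.card V : ℝ) := div_pos hS4 hN
    have ht : Tendsto (fun n : ℕ =>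
        ((Fintype.card V : ℝ) * ((∑ i ∈ Finset.range n, f1 (X i ω)) / n))
          * (((∑ i ∈ Finset.range n, f4 (X i ω)) / n)
            / ((∑ i ∈ Finset.range n, f3 (X i ω)) / n))) atTop
        (𝓝 ((Fintype.card V : ℝ) * ((∑ v : V, f1 v) / (Fintype.card V : ℝ))
          * (((∑ v : V, f4 v) / (Fintype.card V : ℝ))
            / ((∑ v : V, f3 v) / (Fintype.card V : ℝ))))) :=
      (tendsto_const_nhds.mul hω1).mul (hω4.div hω3 hL3.ne')
    have hlim : (Fintype.card V : ℝ) * ((∑ v : V, f1 v) / (Fintype.card V : ℝ))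
          * (((∑ v : V, f4 v) / (Fintype.card V : ℝ))
            / ((∑ v : V, f3 v) / (Fintype.card V : ℝ))) = (A.card : ℝ) := by
      rw [kS4, ← kS1] at *
      have h1 : (∑ v : V, f1 v) ≠ 0 := hS1.ne'
      have h3 : (∑ v : V, f3 v) ≠ 0 := hS3.ne'
      rw [kS1, ← kS3]
      field_simp
    rw [hlim] at ht
    refine ht.congr' ?_
    filter_upwards [hω2.eventually (eventually_gt_nhds hL2),
      hω3.eventually (eventually_gt_nhds hL3),
      hω4.eventually (eventually_gt_nhds hL4),
      eventually_gt_atTop 0] with n p2 p3 p4 hn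
    have hnR : (0 : ℝ) < (n : ℝ) := by exact_mod_cast hn
    have h2 : (0 : ℝ) < ∑ i ∈ Finset.range n, f2 (X i ω) := by
      have := mul_pos p2 hnR
      rwa [div_mul_cancel₀ _ hnR.ne'] at this
    have h3 : (0 : ℝ) < ∑ i ∈ Finset.range n, f3 (X i ω) := by
      have := mul_pos p3 hnR
      rwa [div_mul_cancel₀ _ hnR.ne'] at this
    have h4 : (0 : ℝ) < ∑ i ∈ Finset.range n, f4 (X i ω) := by
      have := mul_pos p4 hnR
      rwa [div_mul_cancel₀ _ hnR.ne'] at this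
    have h2' := h2.ne'
    have h3' := h3.ne'
    have h4' := h4.ne'
    simp only [hFdef]
    field_simp
  -- measurability
  have hAESM : ∀ n, AEStronglyMeasurable (F n) μ := by
    intro n
    have m1 : Measurable fun ω => ∑ i ∈ Finset.range n, f1 (X i ω) :=
      Finset.measurable_sum _ fun i _ => (measurable_of_finite f1).comp (hmeas i)
    have m2 : Measurable fun ω => ∑ i ∈ Finset.range n, f2 (X i ω) :=
      Finset.measurable_sum _ fun i _ => (measurable_of_finite f2).comp (hmeas i)
    have m3 : Measurable fun ω => ∑ i ∈ Finset.range n, f3 (X i ω) :=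
      Finset.measurable_sum _ fun i _ => (measurable_of_finite f3).comp (hmeas i)
    have m4 : Measurable fun ω => ∑ i ∈ Finset.range n, f4 (X i ω) :=
      Finset.measurable_sum _ fun i _ => (measurable_of_finite f4).comp (hmeas i)
    exact (((measurable_const.mul (m1.div m2)).mul
      (measurable_const.mul m2)).div (m3.div m4)).aestronglyMeasurable
  have hTIM : TendstoInMeasure μ F atTop (fun _ => (A.card : ℝ)) :=
    tendstoInMeasure_of_tendsto_ae hAESM key
  have h := tendstoInMeasure_iff_dist.mp hTIM ε hε
  refine tendsto_of_tendsto_of_tendsto_of_le_of_le tendsto_const_nhds h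
    (fun n => zero_le) (fun n => ?_)
  apply measure_mono
  intro ω hω
  simp only [Set.mem_setOf_eq] at hω ⊢
  rw [hF n ω] at hω
  rw [Real.dist_eq]
  exact le_of_lt hω
end

section
/- Under uniform independence sampling of a finite graph, the star-sampling edge weight estimator with induced-subgraph size plug-ins is consistent: for any disjoint nonempty subsets A, B of the vertex set V, the sequence of random variables (Σ_{i ≤ n, X_i ∈ A} |N(X_i) ∩ B| + Σ_{i ≤ n, X_i ∈ B} |N(X_i) ∩ A|) / (|S_A(n)|·(N·|S_B(n)|/n) + |S_B(n)|·(N·|S_A(n)|/n)) converges in probability to w(A,B) = |E_{A,B}|/(|A|·|B|) as the sample size n → ∞. -/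
open MeasureTheory ProbabilityTheory Filter Finset
open scoped Topology

theorem uis_star_edge_weight_consistent
    {V : Type*} [Fintype V] [Nonempty V] [DecidableEq V]
    [MeasurableSpace V] [MeasurableSingletonClass V]
    (G : SimpleGraph V) [DecidableRel G.Adj]
    {Ω : Type*} [MeasurableSpace Ω] (μ : Measure Ω) [IsProbabilityMeasure μ]
    (X : ℕ → Ω → V)
    (hmeas : ∀ i, Measurable (X i))
    (hindep : iIndepFun X μ)
    (hunif : ∀ i v, μ {ω | X i ω = v} = (Fintype.card V : ENNReal)⁻¹)
    (A B : Finset V) (hA : A.Nonempty) (hB : B.Nonempty) (hAB : Disjoint A B) :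
    ∀ ε > (0 : ℝ),
      Tendsto
        (fun n => μ {ω |
          ε < |(∑ i ∈ (Finset.range n).filter (fun i => X i ω ∈ A), ((G.neighborFinset (X i ω) ∩ B).card : ℝ)
                  + ∑ i ∈ (Finset.range n).filter (fun i => X i ω ∈ B), ((G.neighborFinset (X i ω) ∩ A).card : ℝ))
                / ((((Finset.range n).filter (fun i => X i ω ∈ A)).card : ℝ)
                    * ((Fintype.card V : ℝ) * ((((Finset.range n).filter (fun i => X i ω ∈ B)).card : ℝ)) / (n : ℝ))
                  + (((Finset.range n).filter (fun i => X i ω ∈ B)).card : ℝ)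
                    * ((Fintype.card V : ℝ) * ((((Finset.range n).filter (fun i => X i ω ∈ A)).card : ℝ)) / (n : ℝ)))
              - ((((A ×ˢ B).filter (fun p => G.Adj p.1 p.2)).card : ℝ) / ((A.card : ℝ) * (B.card : ℝ)))|})
        atTop (𝓝 0) := by
  intro ε hε
  set N : ℝ := (Fintype.card V : ℝ) with hN
  have hNpos : (0 : ℝ) < N := by
    simpa [hN] using Fintype.card_pos (α := V)
  -- all maps X i have the same (uniform) distribution
  have mapeq : ∀ i, Measure.map (X i) μ = Measure.map (X 0) μ := by
    intro i
    apply MeasureTheory.Measure.ext_of_singleton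
    intro v
    rw [Measure.map_apply (hmeas i) (measurableSet_singleton v),
        Measure.map_apply (hmeas 0) (measurableSet_singleton v)]
    have h1 : X i ⁻¹' {v} = {ω | X i ω = v} := rfl
    have h2 : X 0 ⁻¹' {v} = {ω | X 0 ω = v} := rfl
    rw [h1, h2, hunif i v, hunif 0 v]
  -- strong law of large numbers for empirical averages of g ∘ X
  have slln : ∀ g : V → ℝ, ∀ᵐ ω ∂μ,
      Tendsto (fun n => (∑ i ∈ Finset.range n, g (X i ω)) / (n : ℝ)) atTop
        (𝓝 ((∑ v, g v) / N)) := by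
    intro g
    have gm : Measurable g := measurable_of_countable g
    have hint : Integrable (fun ω => g (X 0 ω)) μ := by
      refine Integrable.mono' (integrable_const (∑ v, |g v|))
        ((gm.comp (hmeas 0)).aestronglyMeasurable) ?_
      filter_upwards with ω
      rw [Real.norm_eq_abs]
      exact Finset.single_le_sum (f := fun v => |g v|) (fun v _ => abs_nonneg _)
        (Finset.mem_univ _)
    have hident : ∀ i, IdentDistrib (fun ω => g (X i ω)) (fun ω => g (X 0 ω)) μ μ :=
      fun i => IdentDistrib.comp ⟨(hmeas i).aemeasurable, (hmeas 0).aemeasurable, mapeq i⟩ gm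
    have hpair : Pairwise (Function.onFun (IndepFun · · μ) fun i ω => g (X i ω)) :=
      fun i j hij => (hindep.indepFun hij).comp gm gm
    have hElaw := strong_law_ae (fun i ω => g (X i ω)) hint hpair hident
    have hmap : IsProbabilityMeasure (Measure.map (X 0) μ) :=
      Measure.isProbabilityMeasure_map (hmeas 0).aemeasurable
    have hE : (μ[fun ω => g (X 0 ω)]) = (∑ v, g v) / N := by
      rw [← integral_map (hmeas 0).aemeasurable gm.aestronglyMeasurable,
        integral_fintype (Integrable.of_finite)]
      have : ∀ v : V, Measure.map (X 0) μ {v} = (Fintype.card V : ENNReal)⁻¹ := by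
        intro v
        rw [Measure.map_apply (hmeas 0) (measurableSet_singleton v)]
        exact hunif 0 v
      simp only [measureReal_def, this]
      rw [Finset.sum_div]
      refine Finset.sum_congr rfl fun v _ => ?_
      rw [ENNReal.toReal_inv, smul_eq_mul, inv_mul_eq_div]
      simp [hN]
    rw [hE] at hElaw
    filter_upwards [hElaw] with ω hω
    simpa [smul_eq_mul, div_eq_inv_mul] using hω
  -- the three test functions
  set gA : V → ℝ := fun v => if v ∈ A then 1 else 0 with hgA
  set gB : V → ℝ := fun v => if v ∈ B then 1 else 0 with hgB
  set gnum : V → ℝ := fun v =>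
    (if v ∈ A then ((G.neighborFinset v ∩ B).card : ℝ) else 0) +
    (if v ∈ B then ((G.neighborFinset v ∩ A).card : ℝ) else 0) with hgnum
  set E : ℝ := (((A ×ˢ B).filter (fun p => G.Adj p.1 p.2)).card : ℝ) with hE
  have hsumA : (∑ v, gA v) = (A.card : ℝ) := by
    simp [hgA, Finset.sum_boole, Finset.filter_mem_eq_inter]
  have hsumB : (∑ v, gB v) = (B.card : ℝ) := by
    simp [hgB, Finset.sum_boole, Finset.filter_mem_eq_inter]
  have hnbA : ∀ a : V, G.neighborFinset a ∩ B = B.filter (fun b => G.Adj a b) := by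
    intro a; ext b; simp [SimpleGraph.mem_neighborFinset, and_comm]
  have hnbB : ∀ b : V, G.neighborFinset b ∩ A = A.filter (fun a => G.Adj a b) := by
    intro b; ext a; simp [SimpleGraph.mem_neighborFinset, and_comm, G.adj_comm]
  have hEcount : (((A ×ˢ B).filter (fun p => G.Adj p.1 p.2)).card : ℕ) =
      ∑ a ∈ A, (B.filter (fun b => G.Adj a b)).card := by
    rw [Finset.card_filter, Finset.sum_product]
    exact Finset.sum_congr rfl fun a _ => (Finset.card_filter _ _).symm
  have hEcount' : (((A ×ˢ B).filter (fun p => G.Adj p.1 p.2)).card : ℕ) =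
      ∑ b ∈ B, (A.filter (fun a => G.Adj a b)).card := by
    rw [Finset.card_filter, Finset.sum_product_right]
    exact Finset.sum_congr rfl fun b _ => (Finset.card_filter _ _).symm
  have hsumnum : (∑ v, gnum v) = 2 * E := by
    simp only [hgnum, Finset.sum_add_distrib]
    rw [Finset.sum_ite_mem, Finset.sum_ite_mem, Finset.univ_inter, Finset.univ_inter]
    have h1 : (∑ a ∈ A, ((G.neighborFinset a ∩ B).card : ℝ)) = E := by
      rw [hE]
      norm_cast
      rw [hEcount]
      exact Finset.sum_congr rfl fun a _ => by rw [hnbA]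
    have h2 : (∑ b ∈ B, ((G.neighborFinset b ∩ A).card : ℝ)) = E := by
      rw [hE]
      norm_cast
      rw [hEcount']
      exact Finset.sum_congr rfl fun b _ => by rw [hnbB]
    rw [h1, h2]; ring
  -- abbreviation for the estimator
  set F : ℕ → Ω → ℝ := fun n ω =>
    (∑ i ∈ (Finset.range n).filter (fun i => X i ω ∈ A), ((G.neighborFinset (X i ω) ∩ B).card : ℝ)
      + ∑ i ∈ (Finset.range n).filter (fun i => X i ω ∈ B), ((G.neighborFinset (X i ω) ∩ A).card : ℝ))
    / ((((Finset.range n).filter (fun i => X i ω ∈ A)).card : ℝ)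
        * ((Fintype.card V : ℝ) * ((((Finset.range n).filter (fun i => X i ω ∈ B)).card : ℝ)) / (n : ℝ))
      + (((Finset.range n).filter (fun i => X i ω ∈ B)).card : ℝ)
        * ((Fintype.card V : ℝ) * ((((Finset.range n).filter (fun i => X i ω ∈ A)).card : ℝ)) / (n : ℝ))) with hF
  set w : ℝ := E / ((A.card : ℝ) * (B.card : ℝ)) with hw
  -- pointwise algebraic identity
  have key : ∀ (p qa qb nn : ℝ), nn ≠ 0 →
      p / (qa * (N * qb / nn) + qb * (N * qa / nn))
        = (p / nn) / (2 * N * (qa / nn) * (qb / nn)) := by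
    intro p qa qb nn hn
    have hden : qa * (N * qb / nn) + qb * (N * qa / nn) = 2 * N * qa * qb / nn := by ring
    have hden2 : 2 * N * (qa / nn) * (qb / nn) = 2 * N * qa * qb / (nn * nn) := by ring
    rw [hden, hden2]
    rcases eq_or_ne (2 * N * qa * qb) 0 with h | h
    · rw [h]; simp
    · field_simp
  -- almost sure convergence of the estimator
  have hae : ∀ᵐ ω ∂μ, Tendsto (fun n => F n ω) atTop (𝓝 w) := by
    filter_upwards [slln gnum, slln gA, slln gB] with ω h1 h2 h3
    rw [hsumnum] at h1
    rw [hsumA] at h2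
    rw [hsumB] at h3
    have hApos : (0 : ℝ) < (A.card : ℝ) := by exact_mod_cast Finset.card_pos.mpr hA
    have hBpos : (0 : ℝ) < (B.card : ℝ) := by exact_mod_cast Finset.card_pos.mpr hB
    have hdenlim : Tendsto
        (fun n => 2 * N * ((∑ i ∈ Finset.range n, gA (X i ω)) / (n : ℝ))
          * ((∑ i ∈ Finset.range n, gB (X i ω)) / (n : ℝ))) atTop
        (𝓝 (2 * N * ((A.card : ℝ) / N) * ((B.card : ℝ) / N))) :=
      (tendsto_const_nhds.mul h2).mul h3
    have hdnz : 2 * N * ((A.card : ℝ) / N) * ((B.card : ℝ) / N) ≠ 0 := by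
      positivity
    have hlim := Tendsto.div h1 hdenlim hdnz
    have hlimval : (2 * E / N) / (2 * N * ((A.card : ℝ) / N) * ((B.card : ℝ) / N)) = w := by
      rw [hw]
      field_simp
    rw [hlimval] at hlim
    refine hlim.congr' ?_
    filter_upwards [eventually_ge_atTop 1] with n hn
    have hn0 : (n : ℝ) ≠ 0 := by positivity
    -- rewrite the filtered sums
    have hP : (∑ i ∈ (Finset.range n).filter (fun i => X i ω ∈ A), ((G.neighborFinset (X i ω) ∩ B).card : ℝ)
        + ∑ i ∈ (Finset.range n).filter (fun i => X i ω ∈ B), ((G.neighborFinset (X i ω) ∩ A).card : ℝ))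
        = ∑ i ∈ Finset.range n, gnum (X i ω) := by
      rw [Finset.sum_filter, Finset.sum_filter, ← Finset.sum_add_distrib]
    have hQA : ((((Finset.range n).filter (fun i => X i ω ∈ A)).card : ℝ))
        = ∑ i ∈ Finset.range n, gA (X i ω) := by
      rw [Finset.card_filter]; push_cast; rfl
    have hQB : ((((Finset.range n).filter (fun i => X i ω ∈ B)).card : ℝ))
        = ∑ i ∈ Finset.range n, gB (X i ω) := by
      rw [Finset.card_filter]; push_cast; rfl
    rw [hF]
    simp only
    rw [hP, hQA, hQB]
    exact (key _ _ _ _ hn0).symm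
  -- measurability of each estimator
  have hmF : ∀ n, Measurable (F n) := by
    intro n
    have mgen : ∀ (g : V → ℝ) (i : ℕ), Measurable (fun ω => g (X i ω)) :=
      fun g i => (measurable_of_countable g).comp (hmeas i)
    have m1 : Measurable (fun ω =>
        ∑ i ∈ (Finset.range n).filter (fun i => X i ω ∈ A), ((G.neighborFinset (X i ω) ∩ B).card : ℝ)) := by
      have : (fun ω => ∑ i ∈ (Finset.range n).filter (fun i => X i ω ∈ A),
          ((G.neighborFinset (X i ω) ∩ B).card : ℝ))
          = fun ω => ∑ i ∈ Finset.range n,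
            (fun v => if v ∈ A then ((G.neighborFinset v ∩ B).card : ℝ) else 0) (X i ω) := by
        funext ω; rw [Finset.sum_filter]
      rw [this]
      exact Finset.measurable_sum _ fun i _ =>
        mgen (fun v => if v ∈ A then ((G.neighborFinset v ∩ B).card : ℝ) else 0) i
    have m2 : Measurable (fun ω =>
        ∑ i ∈ (Finset.range n).filter (fun i => X i ω ∈ B), ((G.neighborFinset (X i ω) ∩ A).card : ℝ)) := by
      have : (fun ω => ∑ i ∈ (Finset.range n).filter (fun i => X i ω ∈ B),
          ((G.neighborFinset (X i ω) ∩ A).card : ℝ))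
          = fun ω => ∑ i ∈ Finset.range n,
            (fun v => if v ∈ B then ((G.neighborFinset v ∩ A).card : ℝ) else 0) (X i ω) := by
        funext ω; rw [Finset.sum_filter]
      rw [this]
      exact Finset.measurable_sum _ fun i _ =>
        mgen (fun v => if v ∈ B then ((G.neighborFinset v ∩ A).card : ℝ) else 0) i
    have mQA : Measurable (fun ω => ((((Finset.range n).filter (fun i => X i ω ∈ A)).card : ℝ))) := by
      have : (fun ω => ((((Finset.range n).filter (fun i => X i ω ∈ A)).card : ℝ)))
          = fun ω => ∑ i ∈ Finset.range n, gA (X i ω) := by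
        funext ω; rw [Finset.card_filter]; push_cast; rfl
      rw [this]
      exact Finset.measurable_sum _ fun i _ => mgen gA i
    have mQB : Measurable (fun ω => ((((Finset.range n).filter (fun i => X i ω ∈ B)).card : ℝ))) := by
      have : (fun ω => ((((Finset.range n).filter (fun i => X i ω ∈ B)).card : ℝ)))
          = fun ω => ∑ i ∈ Finset.range n, gB (X i ω) := by
        funext ω; rw [Finset.card_filter]; push_cast; rfl
      rw [this]
      exact Finset.measurable_sum _ fun i _ => mgen gB i
    exact (m1.add m2).div
      ((mQA.mul ((measurable_const.mul mQB).div_const _)).add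
        (mQB.mul ((measurable_const.mul mQA).div_const _)))
  -- convergence in measure
  have hTIM : TendstoInMeasure μ F atTop (fun _ => w) :=
    tendstoInMeasure_of_tendsto_ae (fun n => (hmF n).aestronglyMeasurable) hae
  have hTIM' := tendstoInMeasure_iff_dist.mp hTIM ε hε
  refine tendsto_of_tendsto_of_tendsto_of_le_of_le tendsto_const_nhds hTIM'
    (fun n => zero_le) (fun n => measure_mono ?_)
  intro ω hω
  simp only [Set.mem_setOf_eq] at hω ⊢
  rw [Real.dist_eq]
  exact le_of_lt hω
end

section
/- Under weighted independence sampling of a finite graph, the re-weighted mean degree estimator is consistent: the sequence of random variables (Σ_{i=1}^{n} deg(X_i)/w(X_i)) / (Σ_{i=1}^{n} 1/w(X_i)) converges in probability to the average degree k_V = (Σ_{v∈V} deg(v))/|V| as the sample size n → ∞. -/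
open MeasureTheory ProbabilityTheory Filter Finset
open scoped Topology

lemma wis_strong_law
    {V : Type*} [Fintype V] [Nonempty V] [DecidableEq V]
    [MeasurableSpace V] [MeasurableSingletonClass V]
    (wt : V → ℝ) (hwt : ∀ v, 0 < wt v)
    {Ω : Type*} [MeasurableSpace Ω] (μ : Measure Ω) [IsProbabilityMeasure μ]
    (X : ℕ → Ω → V)
    (hmeas : ∀ i, Measurable (X i))
    (hindep : iIndepFun X μ)
    (hdist : ∀ i v, μ {ω | X i ω = v} = ENNReal.ofReal (wt v / ∑ u, wt u))
    (g : V → ℝ) :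
    ∀ᵐ ω ∂μ, Tendsto (fun n : ℕ => (∑ i ∈ Finset.range n, g (X i ω)) / n) atTop
      (𝓝 (∑ v, g v * (wt v / ∑ u, wt u))) := by
  have hgm : Measurable g := measurable_of_countable g
  have hS : (0:ℝ) < ∑ u, wt u := Finset.sum_pos (fun u _ => hwt u) univ_nonempty
  -- all X i have the same law
  have hmap : ∀ i, Measure.map (X i) μ = Measure.map (X 0) μ := by
    intro i
    apply MeasureTheory.Measure.ext_of_singleton
    intro v
    rw [Measure.map_apply (hmeas i) (measurableSet_singleton v),
        Measure.map_apply (hmeas 0) (measurableSet_singleton v)]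
    have : ∀ j, X j ⁻¹' {v} = {ω | X j ω = v} := fun j => rfl
    rw [this i, this 0, hdist i v, hdist 0 v]
  set Y : ℕ → Ω → ℝ := fun i ω => g (X i ω) with hY
  have hYm : ∀ i, Measurable (Y i) := fun i => hgm.comp (hmeas i)
  have hident : ∀ i, IdentDistrib (Y i) (Y 0) μ μ := by
    intro i
    exact (IdentDistrib.mk (hmeas i).aemeasurable (hmeas 0).aemeasurable (hmap i)).comp hgm
  have hindep' : Pairwise (Function.onFun (IndepFun · · μ) Y) := by
    intro i j hij
    exact (hindep.comp (fun _ => g) (fun _ => hgm)).indepFun hij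
  obtain ⟨C, hC⟩ : ∃ C, ∀ v, |g v| ≤ C :=
    ⟨Finset.univ.sup' univ_nonempty (fun v => |g v|), fun v => Finset.le_sup' (fun v => |g v|) (mem_univ v)⟩
  have hint : Integrable (Y 0) μ :=
    (integrable_const C).mono' (hYm 0).aestronglyMeasurable (ae_of_all _ fun ω => hC _)
  have hmean : μ[Y 0] = ∑ v, g v * (wt v / ∑ u, wt u) := by
    rw [hY]
    rw [← integral_map (hmeas 0).aemeasurable hgm.aestronglyMeasurable]
    rw [integral_fintype (by exact Integrable.of_finite)]
    refine Finset.sum_congr rfl fun v _ => ?_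
    rw [measureReal_def, Measure.map_apply (hmeas 0) (measurableSet_singleton v)]
    have : X 0 ⁻¹' {v} = {ω | X 0 ω = v} := rfl
    rw [this, hdist 0 v, ENNReal.toReal_ofReal (div_nonneg (hwt v).le hS.le), smul_eq_mul, mul_comm]
  have := strong_law_ae_real Y hint hindep' hident
  rw [hmean] at this
  exact this

theorem wis_mean_degree_consistent
    {V : Type*} [Fintype V] [Nonempty V] [DecidableEq V]
    [MeasurableSpace V] [MeasurableSingletonClass V]
    (G : SimpleGraph V) [DecidableRel G.Adj]
    (wt : V → ℝ) (hwt : ∀ v, 0 < wt v)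
    {Ω : Type*} [MeasurableSpace Ω] (μ : Measure Ω) [IsProbabilityMeasure μ]
    (X : ℕ → Ω → V)
    (hmeas : ∀ i, Measurable (X i))
    (hindep : iIndepFun X μ)
    (hdist : ∀ i v, μ {ω | X i ω = v} = ENNReal.ofReal (wt v / ∑ u, wt u))
 :
    ∀ ε > (0 : ℝ),
      Tendsto
        (fun n => μ {ω |
          ε < |(∑ i ∈ Finset.range n, (G.degree (X i ω) : ℝ) / wt (X i ω))
                / (∑ i ∈ Finset.range n, 1 / wt (X i ω))
              - ((∑ v, (G.degree v : ℝ)) / (Fintype.card V : ℝ))|})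
        atTop (𝓝 0) := by
  intro ε hε
  have hS : (0:ℝ) < ∑ u, wt u := Finset.sum_pos (fun u _ => hwt u) univ_nonempty
  set g1 : V → ℝ := fun v => (G.degree v : ℝ) / wt v
  set g2 : V → ℝ := fun v => 1 / wt v
  set a : ℝ := (∑ v, (G.degree v : ℝ)) / ∑ u, wt u with ha
  set b : ℝ := (Fintype.card V : ℝ) / ∑ u, wt u with hb
  set θ : ℝ := (∑ v, (G.degree v : ℝ)) / (Fintype.card V : ℝ) with hθ
  have hb0 : b ≠ 0 := by
    have : (0:ℝ) < (Fintype.card V : ℝ) := by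
      exact_mod_cast Fintype.card_pos
    positivity
  have ha' : (∑ v, g1 v * (wt v / ∑ u, wt u)) = a := by
    rw [ha, Finset.sum_div]
    refine Finset.sum_congr rfl fun v _ => ?_
    field_simp [g1, (hwt v).ne']
    simp only [g1]; exact div_mul_cancel₀ _ (hwt v).ne'
  have hb' : (∑ v, g2 v * (wt v / ∑ u, wt u)) = b := by
    rw [hb]
    have : ∀ v ∈ Finset.univ, g2 v * (wt v / ∑ u, wt u) = 1 / ∑ u, wt u := by
      intro v _
      field_simp [g2, (hwt v).ne']
      simp only [g2]; exact one_div_mul_cancel (hwt v).ne'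
    rw [Finset.sum_congr rfl this, Finset.sum_const, Finset.card_univ]
    simp [div_eq_mul_inv]
  have hab : a / b = θ := by
    have hN : ((Fintype.card V : ℝ)) ≠ 0 := by
      exact_mod_cast Fintype.card_ne_zero
    rw [ha, hb, hθ]
    field_simp
  -- the ratio converges a.e. to θ
  set R : ℕ → Ω → ℝ := fun n ω =>
    (∑ i ∈ Finset.range n, g1 (X i ω)) / (∑ i ∈ Finset.range n, g2 (X i ω)) with hR
  have hae : ∀ᵐ ω ∂μ, Tendsto (fun n => R n ω) atTop (𝓝 θ) := by
    filter_upwards [wis_strong_law wt hwt μ X hmeas hindep hdist g1,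
      wis_strong_law wt hwt μ X hmeas hindep hdist g2] with ω h1 h2
    rw [ha'] at h1; rw [hb'] at h2
    have := (h1.div h2 hb0)
    rw [hab] at this
    refine this.congr' ?_
    filter_upwards [eventually_ge_atTop 1] with n hn
    have hn0 : (n:ℝ) ≠ 0 := by positivity
    rw [hR]
    rcases eq_or_ne (∑ i ∈ Finset.range n, g2 (X i ω)) 0 with h | h
    · simp [h, div_eq_mul_inv]
    · simp only [Pi.div_apply]
      field_simp
  have hRm : ∀ n, AEStronglyMeasurable (R n) μ := by
    intro n
    refine Measurable.aestronglyMeasurable ?_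
    exact (Finset.measurable_sum _ fun i _ =>
        (measurable_of_countable g1).comp (hmeas i)).div
      (Finset.measurable_sum _ fun i _ => (measurable_of_countable g2).comp (hmeas i))
  have hTIM : TendstoInMeasure μ R atTop (fun _ => θ) :=
    tendstoInMeasure_of_tendsto_ae hRm hae
  have key := hTIM (ENNReal.ofReal ε) (ENNReal.ofReal_pos.mpr hε)
  refine tendsto_of_tendsto_of_tendsto_of_le_of_le tendsto_const_nhds key
    (fun n => zero_le) ?_
  intro n
  refine measure_mono fun ω hω => ?_
  simp only [Set.mem_setOf_eq] at hω ⊢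
  rw [edist_dist, Real.dist_eq]
  exact ENNReal.ofReal_le_ofReal (le_of_lt hω)
end

section
/- Under weighted independence sampling of a finite graph, the re-weighted within-category mean degree estimator is consistent: for any nonempty subset A of the vertex set V, the sequence of random variables (Σ_{i ≤ n, X_i ∈ A} deg(X_i)/w(X_i)) / (Σ_{i ≤ n, X_i ∈ A} 1/w(X_i)) converges in probability to the average degree within A, k_A = (Σ_{v∈A} deg(v))/|A|, as the sample size n → ∞. -/
open MeasureTheory ProbabilityTheory Filter Finset
open scoped Topology

theorem wis_category_mean_degree_consistent
    {V : Type*} [Fintype V] [Nonempty V] [DecidableEq V]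
    [MeasurableSpace V] [MeasurableSingletonClass V]
    (G : SimpleGraph V) [DecidableRel G.Adj]
    (wt : V → ℝ) (hwt : ∀ v, 0 < wt v)
    {Ω : Type*} [MeasurableSpace Ω] (μ : Measure Ω) [IsProbabilityMeasure μ]
    (X : ℕ → Ω → V)
    (hmeas : ∀ i, Measurable (X i))
    (hindep : iIndepFun (m := fun _ => ‹MeasurableSpace V›) X μ)
    (hdist : ∀ i v, μ {ω | X i ω = v} = ENNReal.ofReal (wt v / ∑ u, wt u))
    (A : Finset V) (hA : A.Nonempty) :
    ∀ ε > (0 : ℝ),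
      Tendsto
        (fun n => μ {ω |
          ε < |(∑ i ∈ (Finset.range n).filter (fun i => X i ω ∈ A), (G.degree (X i ω) : ℝ) / wt (X i ω))
                / (∑ i ∈ (Finset.range n).filter (fun i => X i ω ∈ A), 1 / wt (X i ω))
              - ((∑ v ∈ A, (G.degree v : ℝ)) / (A.card : ℝ))|})
        atTop (𝓝 0) := by
  intro ε hε
  set W : ℝ := ∑ u, wt u with hWdef
  have hW : 0 < W := Finset.sum_pos (fun u _ => hwt u) Finset.univ_nonempty
  have hpre : ∀ i (v : V), X i ⁻¹' {v} = {ω | X i ω = v} := by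
    intro i v; ext ω; simp [Set.mem_preimage]
  have hmapv : ∀ i (v : V), μ.map (X i) {v} = ENNReal.ofReal (wt v / W) := by
    intro i v
    rw [Measure.map_apply (hmeas i) (measurableSet_singleton v), hpre i v, hdist i v]
  have hmap : ∀ i, μ.map (X i) = μ.map (X 0) := by
    intro i
    refine MeasureTheory.Measure.ext_of_singleton fun v => ?_
    rw [hmapv i v, hmapv 0 v]
  -- Strong law for compositions
  have key : ∀ F : V → ℝ, ∀ᵐ ω ∂μ,
      Tendsto (fun n => (∑ i ∈ range n, F (X i ω)) / n) atTop
        (𝓝 (∑ v, (wt v / W) * F v)) := by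
    intro F
    have hFmeas : Measurable F := measurable_of_countable F
    have hident : ∀ i, IdentDistrib (fun ω => F (X i ω)) (fun ω => F (X 0 ω)) μ μ := by
      intro i
      exact IdentDistrib.comp ⟨(hmeas i).aemeasurable, (hmeas 0).aemeasurable, hmap i⟩ hFmeas
    have hPM : IsProbabilityMeasure (μ.map (X 0)) :=
      Measure.isProbabilityMeasure_map (hmeas 0).aemeasurable
    have hIntF : Integrable F (μ.map (X 0)) := Integrable.of_finite
    have hint : Integrable (fun ω => F (X 0 ω)) μ := by
      rwa [integrable_map_measure hFmeas.aestronglyMeasurable (hmeas 0).aemeasurable] at hIntF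
    have hpair : Pairwise (Function.onFun (IndepFun · · μ) fun i ω => F (X i ω)) := fun i j hij =>
      (hindep.comp (fun _ => F) (fun _ => hFmeas)).indepFun hij
    have hslln := strong_law_ae_real (fun i ω => F (X i ω)) hint hpair hident
    have hEq : (μ[fun ω => F (X 0 ω)]) = ∑ v, (wt v / W) * F v := by
      rw [← integral_map (hmeas 0).aemeasurable hFmeas.aestronglyMeasurable,
        integral_fintype hIntF]
      refine Finset.sum_congr rfl fun v _ => ?_
      rw [measureReal_def, hmapv 0 v, ENNReal.toReal_ofReal (div_nonneg (hwt v).le hW.le), smul_eq_mul]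
    rwa [hEq] at hslln
  set Fd : V → ℝ := fun v => if v ∈ A then (G.degree v : ℝ) / wt v else 0 with hFddef
  set Fg : V → ℝ := fun v => if v ∈ A then 1 / wt v else 0 with hFgdef
  have hEd : (∑ v, (wt v / W) * Fd v) = (∑ v ∈ A, (G.degree v : ℝ)) / W := by
    rw [Finset.sum_div]
    rw [show (∑ v, (wt v / W) * Fd v)
        = ∑ v, (if v ∈ A then (wt v / W) * ((G.degree v : ℝ) / wt v) else 0) by
      refine Finset.sum_congr rfl fun v _ => ?_
      simp only [hFddef, mul_ite, mul_zero]]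
    rw [Finset.sum_ite_mem, Finset.univ_inter]
    refine Finset.sum_congr rfl fun v _ => ?_
    have h1 := (hwt v).ne'
    have h2 := hW.ne'
    field_simp
  have hEg : (∑ v, (wt v / W) * Fg v) = (A.card : ℝ) / W := by
    rw [show (∑ v, (wt v / W) * Fg v)
        = ∑ v, (if v ∈ A then (wt v / W) * (1 / wt v) else 0) by
      refine Finset.sum_congr rfl fun v _ => ?_
      simp only [hFgdef, mul_ite, mul_zero]]
    rw [Finset.sum_ite_mem, Finset.univ_inter]
    rw [show (∑ v ∈ A, (wt v / W) * (1 / wt v)) = ∑ v ∈ A, 1 / W by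
      refine Finset.sum_congr rfl fun v _ => ?_
      have h1 := (hwt v).ne'
      have h2 := hW.ne'
      field_simp]
    rw [Finset.sum_const, nsmul_eq_mul]
    ring
  have hcardpos : (0 : ℝ) < (A.card : ℝ) := by exact_mod_cast Finset.card_pos.mpr hA
  have hEgpos : (0 : ℝ) < (A.card : ℝ) / W := div_pos hcardpos hW
  set c : ℝ := (∑ v ∈ A, (G.degree v : ℝ)) / (A.card : ℝ) with hcdef
  have hc : ((∑ v ∈ A, (G.degree v : ℝ)) / W) / ((A.card : ℝ) / W) = c := by
    rw [div_div_div_cancel_right₀ hW.ne']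
  -- a.e. convergence of the ratio
  have hae : ∀ᵐ ω ∂μ,
      Tendsto (fun n => (∑ i ∈ range n, Fd (X i ω)) / (∑ i ∈ range n, Fg (X i ω)))
        atTop (𝓝 c) := by
    filter_upwards [key Fd, key Fg] with ω h1 h2
    rw [hEd] at h1
    rw [hEg] at h2
    have h3 := h1.div h2 hEgpos.ne'
    rw [hc] at h3
    refine h3.congr' ?_
    filter_upwards [eventually_ge_atTop 1] with n hn
    have hn' : (n : ℝ) ≠ 0 := by
      simpa using Nat.one_le_iff_ne_zero.mp hn
    simp only [Pi.div_apply]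
    rw [div_div_div_cancel_right₀ hn']
  have hmeasY : ∀ n, AEStronglyMeasurable
      (fun ω => (∑ i ∈ range n, Fd (X i ω)) / (∑ i ∈ range n, Fg (X i ω))) μ := by
    intro n
    exact ((Finset.measurable_sum _ fun i _ =>
        (measurable_of_countable Fd).comp (hmeas i)).div
      (Finset.measurable_sum _ fun i _ =>
        (measurable_of_countable Fg).comp (hmeas i))).aestronglyMeasurable
  have htm : TendstoInMeasure μ
      (fun n ω => (∑ i ∈ range n, Fd (X i ω)) / (∑ i ∈ range n, Fg (X i ω)))
      atTop (fun _ => c) :=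
    tendstoInMeasure_of_tendsto_ae hmeasY hae
  have h := htm (ENNReal.ofReal ε) (ENNReal.ofReal_pos.mpr hε)
  refine tendsto_of_tendsto_of_tendsto_of_le_of_le tendsto_const_nhds h
    (fun n => zero_le) (fun n => measure_mono ?_)
  intro ω hω
  simp only [Set.mem_setOf_eq] at hω ⊢
  have e1 : (∑ i ∈ (Finset.range n).filter (fun i => X i ω ∈ A),
      (G.degree (X i ω) : ℝ) / wt (X i ω)) = ∑ i ∈ range n, Fd (X i ω) := by
    rw [Finset.sum_filter]
  have e2 : (∑ i ∈ (Finset.range n).filter (fun i => X i ω ∈ A),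
      1 / wt (X i ω)) = ∑ i ∈ range n, Fg (X i ω) := by
    rw [Finset.sum_filter]
  rw [edist_dist, Real.dist_eq]
  rw [e1, e2] at hω
  exact ENNReal.ofReal_le_ofReal (le_of_lt hω)
end

section
/- Under weighted independence sampling of a finite graph with at least one edge, the re-weighted star-sampling relative volume estimator is consistent: for any subset A of the vertex set V, the sequence of random variables (Σ_{i=1}^{n} (1/w(X_i))·|N(X_i) ∩ A|) / (Σ_{i=1}^{n} deg(X_i)/w(X_i)), where |N(X_i) ∩ A| is the number of neighbors of X_i that lie in A, converges in probability to f^vol_A = vol(A)/vol(V) as the sample size n → ∞. -/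
open MeasureTheory ProbabilityTheory Filter Finset
open scoped Topology

theorem wis_star_relative_volume_consistent
    {V : Type*} [Fintype V] [Nonempty V] [DecidableEq V]
    [MeasurableSpace V] [MeasurableSingletonClass V]
    (G : SimpleGraph V) [DecidableRel G.Adj]
    (wt : V → ℝ) (hwt : ∀ v, 0 < wt v)
    {Ω : Type*} [MeasurableSpace Ω] (μ : Measure Ω) [IsProbabilityMeasure μ]
    (X : ℕ → Ω → V)
    (hmeas : ∀ i, Measurable (X i))
    (hindep : iIndepFun X μ)
    (hdist : ∀ i v, μ {ω | X i ω = v} = ENNReal.ofReal (wt v / ∑ u, wt u))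
    (hE : G.edgeFinset.Nonempty) (A : Finset V) :
    ∀ ε > (0 : ℝ),
      Tendsto
        (fun n => μ {ω |
          ε < |(∑ i ∈ Finset.range n, (1 / wt (X i ω)) * ((G.neighborFinset (X i ω) ∩ A).card : ℝ))
                / (∑ i ∈ Finset.range n, (G.degree (X i ω) : ℝ) / wt (X i ω))
              - ((∑ v ∈ A, (G.degree v : ℝ)) / (∑ v, (G.degree v : ℝ)))|})
        atTop (𝓝 0) := by
  classical
  intro ε hε
  set W : ℝ := ∑ u, wt u with hWdef
  have hWpos : 0 < W := Finset.sum_pos (fun u _ => hwt u) Finset.univ_nonempty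
  set f : V → ℝ := fun v => (1 / wt v) * ((G.neighborFinset v ∩ A).card : ℝ) with hfdef
  set g : V → ℝ := fun v => (G.degree v : ℝ) / wt v with hgdef
  set θ : ℝ := (∑ v ∈ A, (G.degree v : ℝ)) / (∑ v, (G.degree v : ℝ)) with hθdef
  -- point masses of the pushforward measures
  have hmap : ∀ (i : ℕ) (v : V), (Measure.map (X i) μ) {v} = ENNReal.ofReal (wt v / W) := by
    intro i v
    rw [Measure.map_apply (hmeas i) (measurableSet_singleton v)]
    exact hdist i v
  have hmapeq : ∀ i, Measure.map (X i) μ = Measure.map (X 0) μ := fun i =>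
    Measure.ext_of_singleton (fun v => by rw [hmap i v, hmap 0 v])
  have hident : ∀ (h : V → ℝ) (i : ℕ),
      IdentDistrib (fun ω => h (X i ω)) (fun ω => h (X 0 ω)) μ μ := by
    intro h i
    have base : IdentDistrib (X i) (X 0) μ μ :=
      ⟨(hmeas i).aemeasurable, (hmeas 0).aemeasurable, hmapeq i⟩
    exact base.comp (measurable_of_countable h)
  have hindep' : ∀ (h : V → ℝ), Pairwise (Function.onFun (IndepFun · · μ) (fun i ω => h (X i ω))) := by
    intro h i j hij
    exact (hindep.indepFun hij).comp (measurable_of_countable h) (measurable_of_countable h)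
  have hintegrable : ∀ (h : V → ℝ) (i : ℕ), Integrable (fun ω => h (X i ω)) μ := by
    intro h i
    apply Integrable.mono'
      (integrable_const (Finset.univ.sup' Finset.univ_nonempty (fun v => |h v|)))
    · exact ((measurable_of_countable h).comp (hmeas i)).aestronglyMeasurable
    · filter_upwards with ω
      rw [Real.norm_eq_abs]
      exact Finset.le_sup' (fun v => |h v|) (Finset.mem_univ (X i ω))
  have hexp : ∀ (h : V → ℝ), μ[fun ω => h (X 0 ω)] = ∑ v, (wt v / W) * h v := by
    intro h
    have hm : Measurable h := measurable_of_countable h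
    rw [← integral_map (hmeas 0).aemeasurable hm.aestronglyMeasurable]
    rw [integral_fintype ((integrable_map_measure hm.aestronglyMeasurable
      (hmeas 0).aemeasurable).mpr (hintegrable h 0))]
    refine Finset.sum_congr rfl (fun v _ => ?_)
    rw [measureReal_def, hmap 0 v, ENNReal.toReal_ofReal (div_nonneg (hwt v).le hWpos.le), smul_eq_mul]
  -- counting
  have hcountN : ∑ v, (G.neighborFinset v ∩ A).card = ∑ a ∈ A, G.degree a := by
    have h1 : ∀ v : V, (G.neighborFinset v ∩ A).card
        = ∑ a ∈ A, if G.Adj v a then 1 else 0 := by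
      intro v
      rw [Finset.inter_comm, ← Finset.filter_mem_eq_inter, Finset.card_filter]
      simp [SimpleGraph.mem_neighborFinset]
    simp only [h1]
    rw [Finset.sum_comm]
    refine Finset.sum_congr rfl (fun a _ => ?_)
    rw [SimpleGraph.degree, SimpleGraph.neighborFinset_eq_filter, Finset.card_filter]
    exact Finset.sum_congr rfl (fun v _ => if_congr (G.adj_comm v a) rfl rfl)
  have hvolA : ∑ v, ((G.neighborFinset v ∩ A).card : ℝ) = ∑ a ∈ A, (G.degree a : ℝ) := by
    exact_mod_cast congrArg Nat.cast hcountN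
  have hvolpos : 0 < ∑ v, (G.degree v : ℝ) := by
    have h2 : ∑ v, G.degree v = 2 * G.edgeFinset.card :=
      G.sum_degrees_eq_twice_card_edges
    have h3 : 0 < ∑ v, G.degree v :=
      h2 ▸ Nat.mul_pos two_pos (Finset.card_pos.mpr hE)
    have h4 : (0 : ℝ) < ((∑ v, G.degree v : ℕ) : ℝ) := by exact_mod_cast h3
    rwa [Nat.cast_sum] at h4
  -- expectations
  have hEf : μ[fun ω => f (X 0 ω)] = (∑ a ∈ A, (G.degree a : ℝ)) / W := by
    rw [hexp f, ← hvolA, Finset.sum_div]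
    refine Finset.sum_congr rfl (fun v _ => ?_)
    simp only [hfdef]
    rw [div_mul_eq_mul_div, ← mul_assoc, mul_one_div, div_self (hwt v).ne', one_mul]
  have hEg : μ[fun ω => g (X 0 ω)] = (∑ v, (G.degree v : ℝ)) / W := by
    rw [hexp g, Finset.sum_div]
    refine Finset.sum_congr rfl (fun v _ => ?_)
    simp only [hgdef]
    rw [div_mul_div_comm, mul_comm W (wt v), mul_div_mul_left _ _ (hwt v).ne']
  have hEgne : μ[fun ω => g (X 0 ω)] ≠ 0 := by
    rw [hEg]; positivity
  -- strong law for f and g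
  have hslf := ProbabilityTheory.strong_law_ae (fun i ω => f (X i ω))
    (hintegrable f 0) (hindep' f) (hident f)
  have hslg := ProbabilityTheory.strong_law_ae (fun i ω => g (X i ω))
    (hintegrable g 0) (hindep' g) (hident g)
  -- a.e. convergence of the ratio
  have hae : ∀ᵐ ω ∂μ, Tendsto (fun n =>
      (∑ i ∈ Finset.range n, f (X i ω)) / (∑ i ∈ Finset.range n, g (X i ω)))
      atTop (𝓝 θ) := by
    filter_upwards [hslf, hslg] with ω hfω hgω
    have hdiv := hfω.div hgω hEgne
    have hθeq : μ[fun ω => f (X 0 ω)] / μ[fun ω => g (X 0 ω)] = θ := by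
      rw [hEf, hEg, div_div_div_cancel_right₀]
      exact ne_of_gt hWpos
    rw [hθeq] at hdiv
    refine hdiv.congr' ?_
    filter_upwards [eventually_ge_atTop 1] with n hn
    have hne : ((n : ℝ))⁻¹ ≠ 0 := by
      have : (0:ℝ) < n := by exact_mod_cast hn
      positivity
    simp only [Pi.div_apply, smul_eq_mul]
    rw [mul_div_mul_left _ _ hne]
  -- convergence in measure
  have hmeasfn : ∀ n : ℕ, AEStronglyMeasurable (fun ω =>
      (∑ i ∈ Finset.range n, f (X i ω)) / (∑ i ∈ Finset.range n, g (X i ω))) μ := by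
    intro n
    refine Measurable.aestronglyMeasurable (Measurable.div ?_ ?_)
    · exact Finset.measurable_sum _ (fun i _ =>
        (measurable_of_countable f).comp (hmeas i))
    · exact Finset.measurable_sum _ (fun i _ =>
        (measurable_of_countable g).comp (hmeas i))
  have htim : TendstoInMeasure μ (fun n ω =>
      (∑ i ∈ Finset.range n, f (X i ω)) / (∑ i ∈ Finset.range n, g (X i ω)))
      atTop (fun _ => θ) :=
    tendstoInMeasure_of_tendsto_ae hmeasfn hae
  have h5 := tendstoInMeasure_iff_dist.mp htim ε hε
  refine tendsto_of_tendsto_of_tendsto_of_le_of_le tendsto_const_nhds h5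
    (fun n => zero_le) (fun n => measure_mono ?_)
  intro ω hω
  simp only [Set.mem_setOf_eq, Real.dist_eq] at *
  exact hω.le
end

section
/- Under weighted independence sampling of a finite graph, the re-weighted star-sampling category size estimator is consistent: for any subset A of the vertex set V with vol(A) > 0, the sequence of random variables N · f̂^vol_A(n) · k̂_V(n) / k̂_A(n), where f̂^vol_A(n) = (Σ_{i=1}^{n} (1/w(X_i))·|N(X_i) ∩ A|)/(Σ_{i=1}^{n} deg(X_i)/w(X_i)), k̂_V(n) = (Σ_{i=1}^{n} deg(X_i)/w(X_i))/(Σ_{i=1}^{n} 1/w(X_i)), and k̂_A(n) = (Σ_{i ≤ n, X_i ∈ A} deg(X_i)/w(X_i))/(Σ_{i ≤ n, X_i ∈ A} 1/w(X_i)), converges in probability to |A| as the sample size n → ∞. -/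
open MeasureTheory ProbabilityTheory Filter Finset
open scoped Topology

theorem wis_star_category_size_consistent
    {V : Type*} [Fintype V] [Nonempty V] [DecidableEq V]
    [MeasurableSpace V] [MeasurableSingletonClass V]
    (G : SimpleGraph V) [DecidableRel G.Adj]
    (wt : V → ℝ) (hwt : ∀ v, 0 < wt v)
    {Ω : Type*} [MeasurableSpace Ω] (μ : Measure Ω) [IsProbabilityMeasure μ]
    (X : ℕ → Ω → V)
    (hmeas : ∀ i, Measurable (X i))
    (hindep : iIndepFun X μ)
    (hdist : ∀ i v, μ {ω | X i ω = v} = ENNReal.ofReal (wt v / ∑ u, wt u))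
    (A : Finset V) (hA : 0 < ∑ v ∈ A, G.degree v) :
    ∀ ε > (0 : ℝ),
      Tendsto
        (fun n => μ {ω |
          ε < |(Fintype.card V : ℝ) * ((∑ i ∈ Finset.range n, (1 / wt (X i ω)) * ((G.neighborFinset (X i ω) ∩ A).card : ℝ))
                  / (∑ i ∈ Finset.range n, (G.degree (X i ω) : ℝ) / wt (X i ω)))
                * ((∑ i ∈ Finset.range n, (G.degree (X i ω) : ℝ) / wt (X i ω))
                  / (∑ i ∈ Finset.range n, 1 / wt (X i ω)))
                / ((∑ i ∈ (Finset.range n).filter (fun i => X i ω ∈ A), (G.degree (X i ω) : ℝ) / wt (X i ω))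
                  / (∑ i ∈ (Finset.range n).filter (fun i => X i ω ∈ A), 1 / wt (X i ω)))
              - ((A.card : ℝ))|})
        atTop (𝓝 0) := by
  intro ε hε
  set W : ℝ := ∑ u, wt u with hWdef
  have hWpos : 0 < W := Finset.sum_pos (fun u _ => hwt u) Finset.univ_nonempty
  -- identical distribution of the X i
  have hmap : ∀ i, Measure.map (X i) μ = Measure.map (X 0) μ := by
    intro i
    refine MeasureTheory.Measure.ext_of_singleton (fun v => ?_)
    rw [Measure.map_apply (hmeas i) (measurableSet_singleton v),
        Measure.map_apply (hmeas 0) (measurableSet_singleton v)]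
    have h1 : X i ⁻¹' {v} = {ω | X i ω = v} := rfl
    have h2 : X 0 ⁻¹' {v} = {ω | X 0 ω = v} := rfl
    rw [h1, h2, hdist i v, hdist 0 v]
  have hident : ∀ i, IdentDistrib (X i) (X 0) μ μ :=
    fun i => ⟨(hmeas i).aemeasurable, (hmeas 0).aemeasurable, hmap i⟩
  -- LLN helper for any observable f : V → ℝ
  have key : ∀ f : V → ℝ, ∀ᵐ ω ∂μ, Tendsto (fun n : ℕ => (∑ i ∈ range n, f (X i ω)) / n)
      atTop (𝓝 ((∑ v, f v * wt v) / W)) := by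
    intro f
    have mf : Measurable f := measurable_of_countable f
    haveI : IsProbabilityMeasure (Measure.map (X 0) μ) :=
      Measure.isProbabilityMeasure_map (hmeas 0).aemeasurable
    have hint : Integrable (fun ω => f (X 0 ω)) μ :=
      (integrable_map_measure (μ := μ) (f := X 0) (g := f)
        mf.aestronglyMeasurable (hmeas 0).aemeasurable).mp .of_finite
    have hid : ∀ i, IdentDistrib (fun ω => f (X i ω)) (fun ω => f (X 0 ω)) μ μ :=
      fun i => (hident i).comp mf
    have hpind : Pairwise (Function.onFun (IndepFun · · μ) (fun i ω => f (X i ω))) := by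
      intro i j hij
      exact (hindep.indepFun hij).comp mf mf
    have hlln := strong_law_ae_real (fun i ω => f (X i ω)) hint hpind hid
    have hE : (μ[fun ω => f (X 0 ω)]) = (∑ v, f v * wt v) / W := by
      have h1 : (μ[fun ω => f (X 0 ω)]) = ∫ y, f y ∂(Measure.map (X 0) μ) :=
        (integral_map (hmeas 0).aemeasurable mf.aestronglyMeasurable).symm
      rw [h1, integral_fintype .of_finite]
      have h2 : ∀ v : V, (Measure.map (X 0) μ).real {v} = wt v / W := by
        intro v
        rw [measureReal_def, Measure.map_apply (hmeas 0) (measurableSet_singleton v)]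
        have hpre : X 0 ⁻¹' {v} = {ω | X 0 ω = v} := rfl
        rw [hpre, hdist 0 v, ENNReal.toReal_ofReal (div_nonneg (hwt v).le hWpos.le)]
      simp only [h2, smul_eq_mul]
      rw [Finset.sum_div]
      exact Finset.sum_congr rfl (fun v _ => by ring)
    rwa [hE] at hlln
  -- the five observables
  set f1 : V → ℝ := fun v => (1 / wt v) * ((G.neighborFinset v ∩ A).card : ℝ) with hf1
  set f2 : V → ℝ := fun v => (G.degree v : ℝ) / wt v with hf2
  set f3 : V → ℝ := fun v => 1 / wt v with hf3
  set f4 : V → ℝ := fun v => if v ∈ A then (G.degree v : ℝ) / wt v else 0 with hf4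
  set f5 : V → ℝ := fun v => if v ∈ A then 1 / wt v else 0 with hf5
  -- the constants
  set volA : ℝ := ∑ v ∈ A, (G.degree v : ℝ) with hvolA
  set volV : ℝ := ∑ v, (G.degree v : ℝ) with hvolV
  set NN : ℝ := (Fintype.card V : ℝ) with hNN
  set cA : ℝ := (A.card : ℝ) with hcA
  have hvolApos : 0 < volA := by
    rw [hvolA]
    exact_mod_cast hA
  have hvolVpos : 0 < volV := lt_of_lt_of_le hvolApos
    (Finset.sum_le_sum_of_subset_of_nonneg (Finset.subset_univ A)
      (fun v _ _ => by positivity))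
  have hNNpos : 0 < NN := by rw [hNN]; exact_mod_cast Fintype.card_pos
  have hAne : A.Nonempty := by
    rcases A.eq_empty_or_nonempty with h | h
    · simp [h] at hA
    · exact h
  have hcApos : 0 < cA := by rw [hcA]; exact_mod_cast Finset.card_pos.mpr hAne
  -- sums of the observables
  have hs1 : ∑ v, f1 v * wt v = volA := by
    have hterm : ∀ v : V, f1 v * wt v = ((G.neighborFinset v ∩ A).card : ℝ) := by
      intro v
      simp only [hf1]
      field_simp
      exact mul_div_cancel_left₀ _ (hwt v).ne'
    rw [Finset.sum_congr rfl (fun v _ => hterm v)]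
    -- graph identity
    have hnat : ∑ v : V, (G.neighborFinset v ∩ A).card = ∑ a ∈ A, G.degree a := by
      have h1 : ∀ v : V, (G.neighborFinset v ∩ A).card
          = ∑ a ∈ A, if G.Adj v a then 1 else 0 := by
        intro v
        rw [← Finset.card_filter]
        congr 1
        ext a
        simp [and_comm]
      rw [Finset.sum_congr rfl (fun v _ => h1 v), Finset.sum_comm]
      refine Finset.sum_congr rfl (fun a _ => ?_)
      have h2 : ∀ v : V, (if G.Adj v a then 1 else 0) = (if G.Adj a v then 1 else 0) := by
        intro v
        by_cases h : G.Adj v a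
        · rw [if_pos h, if_pos h.symm]
        · rw [if_neg h, if_neg (fun h' => h h'.symm)]
      calc ∑ v : V, (if G.Adj v a then 1 else 0)
          = ∑ v : V, (if G.Adj a v then 1 else 0) := Finset.sum_congr rfl (fun v _ => h2 v)
        _ = (Finset.univ.filter (fun v => G.Adj a v)).card := (Finset.card_filter _ _).symm
        _ = G.degree a := by
            rw [← SimpleGraph.card_neighborFinset_eq_degree, SimpleGraph.neighborFinset_eq_filter]
    rw [hvolA]
    exact_mod_cast congrArg (Nat.cast : ℕ → ℝ) hnat
  have hs2 : ∑ v, f2 v * wt v = volV := by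
    refine Finset.sum_congr rfl (fun v _ => ?_)
    simp only [hf2]
    exact div_mul_cancel₀ _ (hwt v).ne'
  have hs3 : ∑ v, f3 v * wt v = NN := by
    have hterm : ∀ v : V, f3 v * wt v = 1 := by
      intro v
      simp only [hf3]
      exact div_mul_cancel₀ 1 (hwt v).ne'
    rw [Finset.sum_congr rfl (fun v _ => hterm v), Finset.sum_const, Finset.card_univ,
      nsmul_eq_mul, mul_one, hNN]
  have hs4 : ∑ v, f4 v * wt v = volA := by
    have hterm : ∀ v : V, f4 v * wt v = if v ∈ A then (G.degree v : ℝ) else 0 := by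
      intro v
      by_cases h : v ∈ A
      · simp only [hf4, if_pos h]
        exact div_mul_cancel₀ _ (hwt v).ne'
      · simp [hf4, if_neg h]
    rw [Finset.sum_congr rfl (fun v _ => hterm v), Finset.sum_ite_mem, Finset.univ_inter]
  have hs5 : ∑ v, f5 v * wt v = cA := by
    have hterm : ∀ v : V, f5 v * wt v = if v ∈ A then 1 else 0 := by
      intro v
      by_cases h : v ∈ A
      · simp only [hf5, if_pos h]
        exact div_mul_cancel₀ 1 (hwt v).ne'
      · simp [hf5, if_neg h]
    rw [Finset.sum_congr rfl (fun v _ => hterm v), Finset.sum_ite_mem, Finset.univ_inter,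
      Finset.sum_const, nsmul_eq_mul, mul_one, hcA]
  -- the statistic in convenient form
  set F : ℕ → Ω → ℝ := fun n ω =>
    NN * ((∑ i ∈ range n, f1 (X i ω)) / (∑ i ∈ range n, f2 (X i ω)))
      * ((∑ i ∈ range n, f2 (X i ω)) / (∑ i ∈ range n, f3 (X i ω)))
      / ((∑ i ∈ range n, f4 (X i ω)) / (∑ i ∈ range n, f5 (X i ω))) with hF
  -- a.e. convergence of F to cA
  have hae : ∀ᵐ ω ∂μ, Tendsto (fun n => F n ω) atTop (𝓝 cA) := by
    filter_upwards [key f1, key f2, key f3, key f4, key f5] with ω h1 h2 h3 h4 h5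
    rw [hs1] at h1; rw [hs2] at h2; rw [hs3] at h3; rw [hs4] at h4; rw [hs5] at h5
    have hL2ne : volV / W ≠ 0 := (div_pos hvolVpos hWpos).ne'
    have hL3ne : NN / W ≠ 0 := (div_pos hNNpos hWpos).ne'
    have hL5ne : cA / W ≠ 0 := (div_pos hcApos hWpos).ne'
    have hL45ne : (volA / W) / (cA / W) ≠ 0 :=
      (div_pos (div_pos hvolApos hWpos) (div_pos hcApos hWpos)).ne'
    have hT12 := Filter.Tendsto.div h1 h2 hL2ne
    have hT23 := Filter.Tendsto.div h2 h3 hL3ne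
    have hT45 := Filter.Tendsto.div h4 h5 hL5ne
    have hTnum := Filter.Tendsto.mul (Filter.Tendsto.mul
      (tendsto_const_nhds (x := NN) (f := atTop (α := ℕ))) hT12) hT23
    have hT := Filter.Tendsto.div hTnum hT45 hL45ne
    have harith : NN * ((volA / W) / (volV / W)) * ((volV / W) / (NN / W))
        / ((volA / W) / (cA / W)) = cA := by
      field_simp
    rw [harith] at hT
    refine hT.congr' ?_
    filter_upwards [eventually_ge_atTop 1] with n hn
    have hnpos : 0 < n := hn
    have hn0 : (n : ℝ) ≠ 0 := Nat.cast_ne_zero.mpr hnpos.ne'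
    have ddc : ∀ x y : ℝ, (x / (n : ℝ)) / (y / (n : ℝ)) = x / y := by
      intro x y
      rcases eq_or_ne y 0 with h | h
      · simp [h]
      · field_simp
    simp only [Pi.div_apply, ddc, hF]
  -- measurability
  have hFmeas : ∀ n, AEStronglyMeasurable (F n) μ := by
    intro n
    have hsum : ∀ f : V → ℝ, Measurable (fun ω => ∑ i ∈ range n, f (X i ω)) := by
      intro f
      exact Finset.measurable_sum _ (fun i _ => (measurable_of_countable f).comp (hmeas i))
    exact ((((measurable_const.mul ((hsum f1).div (hsum f2))).mul
      ((hsum f2).div (hsum f3))).div ((hsum f4).div (hsum f5)))).aestronglyMeasurable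
  have hTIM : TendstoInMeasure μ F atTop (fun _ => cA) :=
    tendstoInMeasure_of_tendsto_ae hFmeas hae
  have hmain := hTIM (ENNReal.ofReal ε) (ENNReal.ofReal_pos.mpr hε)
  refine tendsto_of_tendsto_of_tendsto_of_le_of_le tendsto_const_nhds hmain
    (fun n => zero_le) (fun n => measure_mono ?_)
  intro ω hω
  simp only [Set.mem_setOf_eq] at hω ⊢
  rw [edist_dist, Real.dist_eq]
  have hrw4 : ∑ i ∈ (Finset.range n).filter (fun i => X i ω ∈ A),
      (G.degree (X i ω) : ℝ) / wt (X i ω) = ∑ i ∈ range n, f4 (X i ω) := by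
    rw [Finset.sum_filter]
  have hrw5 : ∑ i ∈ (Finset.range n).filter (fun i => X i ω ∈ A),
      (1 : ℝ) / wt (X i ω) = ∑ i ∈ range n, f5 (X i ω) := by
    rw [Finset.sum_filter]
  rw [hrw4, hrw5] at hω
  simp only [hF, hf1, hf2, hf3, hf4, hf5]
  exact ENNReal.ofReal_le_ofReal (le_of_lt hω)
end

section
/- Under weighted independence sampling of a finite graph, the re-weighted induced-subgraph edge weight estimator is consistent: for any disjoint nonempty subsets A, B of the vertex set V, the sequence of random variables (Σ_{i=1}^{n} Σ_{j=1}^{n} 1{X_i ∈ A, X_j ∈ B, and {X_i, X_j} is an edge of G} / (w(X_i)·w(X_j))) / ((Σ_{i ≤ n, X_i ∈ A} 1/w(X_i)) · (Σ_{j ≤ n, X_j ∈ B} 1/w(X_j))) converges in probability to w(A,B) = |E_{A,B}|/(|A|·|B|) as the sample size n → ∞. -/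
open MeasureTheory ProbabilityTheory Filter Finset
open scoped Topology

private lemma sum_comp_eq_counts {V : Type*} [Fintype V] [DecidableEq V]
    (f : V → ℝ) (g : ℕ → V) (n : ℕ) :
    ∑ i ∈ Finset.range n, f (g i) =
      ∑ v : V, (∑ i ∈ Finset.range n, if g i = v then (1:ℝ) else 0) * f v := by
  simp_rw [Finset.sum_mul, ite_mul, one_mul, zero_mul]
  rw [Finset.sum_comm]
  refine Finset.sum_congr rfl fun i _ => ?_
  simp [Finset.sum_ite_eq']

private lemma sum_univ_ite_mem {V : Type*} [Fintype V] [DecidableEq V]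
    (C : Finset V) (f : V → ℝ) :
    ∑ v : V, (if v ∈ C then f v else 0) = ∑ v ∈ C, f v := by
  rw [Finset.sum_ite_mem, Finset.univ_inter]

theorem wis_induced_edge_weight_consistent
    {V : Type*} [Fintype V] [Nonempty V] [DecidableEq V]
    [MeasurableSpace V] [MeasurableSingletonClass V]
    (G : SimpleGraph V) [DecidableRel G.Adj]
    (wt : V → ℝ) (hwt : ∀ v, 0 < wt v)
    {Ω : Type*} [MeasurableSpace Ω] (μ : Measure Ω) [IsProbabilityMeasure μ]
    (X : ℕ → Ω → V)
    (hmeas : ∀ i, Measurable (X i))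
    (hindep : iIndepFun X μ)
    (hdist : ∀ i v, μ {ω | X i ω = v} = ENNReal.ofReal (wt v / ∑ u, wt u))
    (A B : Finset V) (hA : A.Nonempty) (hB : B.Nonempty) (hAB : Disjoint A B) :
    ∀ ε > (0 : ℝ),
      Tendsto
        (fun n => μ {ω |
          ε < |(∑ i ∈ Finset.range n, ∑ j ∈ Finset.range n,
                  (if X i ω ∈ A ∧ X j ω ∈ B ∧ G.Adj (X i ω) (X j ω)
                    then 1 / (wt (X i ω) * wt (X j ω)) else 0))
                / ((∑ i ∈ (Finset.range n).filter (fun i => X i ω ∈ A), 1 / wt (X i ω))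
                  * (∑ j ∈ (Finset.range n).filter (fun i => X i ω ∈ B), 1 / wt (X j ω)))
              - ((((A ×ˢ B).filter (fun p => G.Adj p.1 p.2)).card : ℝ) / ((A.card : ℝ) * (B.card : ℝ)))|})
        atTop (𝓝 0) := by
  intro ε hε
  set S : ℝ := ∑ u, wt u with hSdef
  have hS : 0 < S := Finset.sum_pos (fun u _ => hwt u) Finset.univ_nonempty
  set p : V → ℝ := fun v => wt v / S with hp
  set s : ℕ → Ω → V → ℝ := fun n ω v => ∑ i ∈ Finset.range n, if X i ω = v then (1:ℝ) else 0
    with hsdef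
  -- identical distribution of the samples
  have hident : ∀ i, IdentDistrib (X i) (X 0) μ μ := by
    intro i
    refine ⟨(hmeas i).aemeasurable, (hmeas 0).aemeasurable, ?_⟩
    refine Measure.ext_of_singleton fun v => ?_
    rw [Measure.map_apply (hmeas i) (measurableSet_singleton v),
        Measure.map_apply (hmeas 0) (measurableSet_singleton v)]
    exact (hdist i v).trans (hdist 0 v).symm
  -- strong law for indicator counts
  have hslln : ∀ v : V, ∀ᵐ ω ∂μ, Tendsto (fun n => s n ω v / n) atTop (𝓝 (p v)) := by
    intro v
    set Y : ℕ → Ω → ℝ := fun i ω => if X i ω = v then 1 else 0 with hY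
    have hfm : Measurable (fun u : V => if u = v then (1:ℝ) else 0) := measurable_of_countable _
    have hint : Integrable (Y 0) μ := by
      have hYe : Y 0 = Set.indicator {ω | X 0 ω = v} (fun _ => (1:ℝ)) := by
        funext ω; simp [hY, Set.indicator_apply, Set.mem_setOf_eq]
      rw [hYe]
      exact (integrable_const (1:ℝ)).indicator ((hmeas 0) (measurableSet_singleton v))
    have hpind : Pairwise (Function.onFun (IndepFun · · μ) Y) :=
      fun i j hij => (hindep.indepFun hij).comp hfm hfm
    have hid : ∀ i, IdentDistrib (Y i) (Y 0) μ μ := fun i => (hident i).comp hfm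
    have hEY : μ[Y 0] = p v := by
      have hYe : Y 0 = Set.indicator {ω | X 0 ω = v} (fun _ => (1:ℝ)) := by
        funext ω; simp [hY, Set.indicator_apply, Set.mem_setOf_eq]
      have hms : MeasurableSet {ω | X 0 ω = v} := (hmeas 0) (measurableSet_singleton v)
      rw [hYe, integral_indicator_const (1:ℝ) hms, Measure.real, hdist 0 v, smul_eq_mul, mul_one,
        ENNReal.toReal_ofReal (div_nonneg (hwt v).le hS.le)]
    have h := strong_law_ae_real Y hint hpind hid
    rw [hEY] at h
    exact h
  have hae : ∀ᵐ ω ∂μ, ∀ v : V, Tendsto (fun n => s n ω v / n) atTop (𝓝 (p v)) :=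
    ae_all_iff.2 hslln
  -- abbreviations for the statistic and its limit
  set θ : ℝ := (((A ×ˢ B).filter (fun p => G.Adj p.1 p.2)).card : ℝ) /
      ((A.card : ℝ) * (B.card : ℝ)) with hθ
  set F : ℕ → Ω → ℝ := fun n ω =>
      (∑ i ∈ Finset.range n, ∑ j ∈ Finset.range n,
          (if X i ω ∈ A ∧ X j ω ∈ B ∧ G.Adj (X i ω) (X j ω)
            then 1 / (wt (X i ω) * wt (X j ω)) else 0))
        / ((∑ i ∈ (Finset.range n).filter (fun i => X i ω ∈ A), 1 / wt (X i ω))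
          * (∑ j ∈ (Finset.range n).filter (fun i => X i ω ∈ B), 1 / wt (X j ω))) with hF
  -- structural identities
  have hcount : ∀ (f : V → ℝ) (ω : Ω) (n : ℕ),
      ∑ i ∈ Finset.range n, f (X i ω) = ∑ v : V, s n ω v * f v := by
    intro f ω n
    simp only [hsdef]
    exact sum_comp_eq_counts f (fun i => X i ω) n
  have hden : ∀ (C : Finset V) (n : ℕ) (ω : Ω),
      (∑ i ∈ (Finset.range n).filter (fun i => X i ω ∈ C), 1 / wt (X i ω)) =
        ∑ a ∈ C, s n ω a / wt a := by
    intro C n ω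
    rw [Finset.sum_filter]
    have e : (∑ i ∈ Finset.range n, if X i ω ∈ C then 1 / wt (X i ω) else 0)
        = ∑ v : V, s n ω v * (if v ∈ C then 1 / wt v else 0) :=
      hcount (fun u => if u ∈ C then 1 / wt u else 0) ω n
    rw [e]
    simp_rw [mul_ite, mul_zero, mul_one_div]
    exact sum_univ_ite_mem C _
  have hnum : ∀ (n : ℕ) (ω : Ω),
      (∑ i ∈ Finset.range n, ∑ j ∈ Finset.range n,
          (if X i ω ∈ A ∧ X j ω ∈ B ∧ G.Adj (X i ω) (X j ω)
            then 1 / (wt (X i ω) * wt (X j ω)) else 0)) =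
        ∑ a ∈ A, ∑ b ∈ B, (if G.Adj a b then s n ω a * s n ω b / (wt a * wt b) else 0) := by
    intro n ω
    have e1 : ∀ u : V,
        (∑ j ∈ Finset.range n, if u ∈ A ∧ X j ω ∈ B ∧ G.Adj u (X j ω)
            then 1 / (wt u * wt (X j ω)) else 0) =
        ∑ v : V, s n ω v * (if u ∈ A ∧ v ∈ B ∧ G.Adj u v then 1 / (wt u * wt v) else 0) :=
      fun u => hcount
        (fun v => if u ∈ A ∧ v ∈ B ∧ G.Adj u v then 1 / (wt u * wt v) else 0) ω n
    have e2 : (∑ i ∈ Finset.range n, ∑ v : V, s n ω v *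
          (if X i ω ∈ A ∧ v ∈ B ∧ G.Adj (X i ω) v then 1 / (wt (X i ω) * wt v) else 0)) =
        ∑ u : V, s n ω u * ∑ v : V, s n ω v *
          (if u ∈ A ∧ v ∈ B ∧ G.Adj u v then 1 / (wt u * wt v) else 0) :=
      hcount (fun u => ∑ v : V, s n ω v *
        (if u ∈ A ∧ v ∈ B ∧ G.Adj u v then 1 / (wt u * wt v) else 0)) ω n
    rw [Finset.sum_congr rfl (fun i _ => e1 (X i ω)), e2]
    simp_rw [ite_and, mul_ite, mul_zero, Finset.sum_ite_irrel, Finset.sum_const_zero]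
    simp_rw [mul_ite, mul_zero]
    rw [sum_univ_ite_mem A]
    refine Finset.sum_congr rfl fun a _ => ?_
    rw [Finset.mul_sum]
    simp_rw [mul_ite, mul_zero]
    rw [sum_univ_ite_mem B]
    refine Finset.sum_congr rfl fun b _ => ?_
    split_ifs with h
    · ring
    · rfl
  -- rewrite F in terms of normalized counts, for n ≥ 1
  have hFR : ∀ (ω : Ω) (n : ℕ), 1 ≤ n → F n ω =
      (∑ a ∈ A, ∑ b ∈ B,
          (if G.Adj a b then (s n ω a / n) * (s n ω b / n) / (wt a * wt b) else 0))
        / ((∑ a ∈ A, (s n ω a / n) / wt a) * (∑ b ∈ B, (s n ω b / n) / wt b)) := by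
    intro ω n hn
    have hn0 : (n : ℝ) ≠ 0 := Nat.cast_ne_zero.2 (by omega)
    have hnn : ((n : ℝ) * n) ≠ 0 := mul_ne_zero hn0 hn0
    have e1 : (∑ a ∈ A, ∑ b ∈ B,
          (if G.Adj a b then (s n ω a / n) * (s n ω b / n) / (wt a * wt b) else 0)) =
        (∑ a ∈ A, ∑ b ∈ B, (if G.Adj a b then s n ω a * s n ω b / (wt a * wt b) else 0))
          / ((n : ℝ) * n) := by
      conv_rhs => rw [Finset.sum_div]
      refine Finset.sum_congr rfl fun a _ => ?_
      conv_rhs => rw [Finset.sum_div]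
      refine Finset.sum_congr rfl fun b _ => ?_
      split_ifs with h
      · rw [div_mul_div_comm, div_right_comm]
      · rw [zero_div]
    have e2 : ∀ C : Finset V, (∑ a ∈ C, (s n ω a / n) / wt a) =
        (∑ a ∈ C, s n ω a / wt a) / (n : ℝ) := by
      intro C
      conv_rhs => rw [Finset.sum_div]
      exact Finset.sum_congr rfl fun a _ => div_right_comm _ _ _
    simp only [hF]
    rw [hnum n ω, hden A n ω, hden B n ω, e1, e2 A, e2 B, div_mul_div_comm,
      div_div_eq_mul_div, div_mul_cancel₀ _ hnn]
  -- a.e. convergence of F to θ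
  have haet : ∀ᵐ ω ∂μ, Tendsto (fun n => F n ω) atTop (𝓝 θ) := by
    filter_upwards [hae] with ω hω
    have hnum_t : Tendsto (fun n => ∑ a ∈ A, ∑ b ∈ B,
        (if G.Adj a b then (s n ω a / n) * (s n ω b / n) / (wt a * wt b) else 0)) atTop
        (𝓝 (∑ a ∈ A, ∑ b ∈ B, (if G.Adj a b then p a * p b / (wt a * wt b) else 0))) := by
      refine tendsto_finset_sum _ fun a _ => tendsto_finset_sum _ fun b _ => ?_
      by_cases h : G.Adj a b
      · simp only [h, if_true]
        exact ((hω a).mul (hω b)).div_const _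
      · simp only [h, if_false]
        exact tendsto_const_nhds
    have hden_t : ∀ C : Finset V, Tendsto (fun n => ∑ a ∈ C, (s n ω a / n) / wt a) atTop
        (𝓝 (∑ a ∈ C, p a / wt a)) :=
      fun C => tendsto_finset_sum _ fun a _ => (hω a).div_const _
    have hden_val : ∀ C : Finset V, (∑ a ∈ C, p a / wt a) = (C.card : ℝ) / S := by
      intro C
      rw [Finset.sum_congr rfl (fun a _ => show p a / wt a = 1 / S by
        rw [hp]; rw [div_right_comm, div_self (ne_of_gt (hwt a))]),
        Finset.sum_const, nsmul_eq_mul, mul_one_div]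
    have hnum_val : (∑ a ∈ A, ∑ b ∈ B, (if G.Adj a b then p a * p b / (wt a * wt b) else 0)) =
        ((((A ×ˢ B).filter (fun p => G.Adj p.1 p.2)).card : ℝ)) * (1 / (S * S)) := by
      rw [← Finset.sum_product']
      rw [Finset.sum_congr rfl (fun q hq => show
          (if G.Adj q.1 q.2 then p q.1 * p q.2 / (wt q.1 * wt q.2) else 0) =
          (if G.Adj q.1 q.2 then 1 / (S * S) else 0) by
        split_ifs with h
        · rw [hp]
          field_simp [ne_of_gt (hwt q.1), ne_of_gt (hwt q.2), ne_of_gt hS]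
        · rfl)]
      rw [← Finset.sum_filter, Finset.sum_const, nsmul_eq_mul]
    have hcardA : (0:ℝ) < A.card := by exact_mod_cast Finset.card_pos.2 hA
    have hcardB : (0:ℝ) < B.card := by exact_mod_cast Finset.card_pos.2 hB
    have hden_ne : ((A.card : ℝ) / S) * ((B.card : ℝ) / S) ≠ 0 := by positivity
    have hlim := hnum_t.div ((hden_t A).mul (hden_t B))
      (by rw [hden_val A, hden_val B]; exact hden_ne)
    have hval : (∑ a ∈ A, ∑ b ∈ B, (if G.Adj a b then p a * p b / (wt a * wt b) else 0)) /
        ((∑ a ∈ A, p a / wt a) * (∑ b ∈ B, p b / wt b)) = θ := by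
      rw [hnum_val, hden_val A, hden_val B, hθ]
      field_simp
    rw [hval] at hlim
    refine hlim.congr' ?_
    filter_upwards [eventually_ge_atTop 1] with n hn
    exact (hFR ω n hn).symm
  -- measurability of F n
  have hFmeas : ∀ n, Measurable (F n) := by
    intro n
    have hnum_m : Measurable (fun ω => ∑ i ∈ Finset.range n, ∑ j ∈ Finset.range n,
        (if X i ω ∈ A ∧ X j ω ∈ B ∧ G.Adj (X i ω) (X j ω)
          then 1 / (wt (X i ω) * wt (X j ω)) else 0)) := by
      refine Finset.measurable_sum _ fun i _ => Finset.measurable_sum _ fun j _ => ?_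
      exact (measurable_of_countable
        (fun q : V × V => if q.1 ∈ A ∧ q.2 ∈ B ∧ G.Adj q.1 q.2
          then 1 / (wt q.1 * wt q.2) else 0)).comp ((hmeas i).prodMk (hmeas j))
    have hden_m : ∀ C : Finset V, Measurable
        (fun ω => ∑ i ∈ (Finset.range n).filter (fun i => X i ω ∈ C), 1 / wt (X i ω)) := by
      intro C
      have he : (fun ω => ∑ i ∈ (Finset.range n).filter (fun i => X i ω ∈ C), 1 / wt (X i ω)) =
          fun ω => ∑ i ∈ Finset.range n, if X i ω ∈ C then 1 / wt (X i ω) else 0 := by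
        funext ω; rw [Finset.sum_filter]
      rw [he]
      exact Finset.measurable_sum _ fun i _ =>
        (measurable_of_countable (fun u => if u ∈ C then 1 / wt u else 0)).comp (hmeas i)
    exact hnum_m.div ((hden_m A).mul (hden_m B))
  -- conclude via convergence in measure
  have hTIM : TendstoInMeasure μ F atTop (fun _ => θ) :=
    tendstoInMeasure_of_tendsto_ae (fun n => (hFmeas n).aestronglyMeasurable) haet
  have h := tendstoInMeasure_iff_dist.1 hTIM ε hε
  refine tendsto_of_tendsto_of_tendsto_of_le_of_le tendsto_const_nhds h
    (fun n => zero_le) (fun n => measure_mono ?_)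
  intro ω hω
  simp only [Set.mem_setOf_eq] at hω ⊢
  rw [Real.dist_eq]
  exact hω.le
end

section
/- Under weighted independence sampling of a finite graph, the re-weighted star-sampling edge weight estimator with re-weighted induced-subgraph size plug-ins is consistent: for any disjoint nonempty subsets A, B of the vertex set V, the sequence of random variables (Σ_{i ≤ n, X_i ∈ A} |N(X_i) ∩ B|/w(X_i) + Σ_{i ≤ n, X_i ∈ B} |N(X_i) ∩ A|/w(X_i)) / (W_A(n)·|B̂(n)| + W_B(n)·|Â(n)|), where W_A(n) = Σ_{i ≤ n, X_i ∈ A} 1/w(X_i), W_B(n) = Σ_{i ≤ n, X_i ∈ B} 1/w(X_i), |Â(n)| = N·W_A(n)/(Σ_{i=1}^{n} 1/w(X_i)), and |B̂(n)| = N·W_B(n)/(Σ_{i=1}^{n} 1/w(X_i)), converges in probability to w(A,B) = |E_{A,B}|/(|A|·|B|) as the sample size n → ∞. -/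
open MeasureTheory ProbabilityTheory Filter Finset
open scoped Topology

lemma wis_slln
    {V : Type*} [Fintype V] [Nonempty V]
    [MeasurableSpace V] [MeasurableSingletonClass V]
    (wt : V → ℝ) (hwt : ∀ v, 0 < wt v)
    {Ω : Type*} [MeasurableSpace Ω] (μ : Measure Ω) [IsProbabilityMeasure μ]
    (X : ℕ → Ω → V)
    (hmeas : ∀ i, Measurable (X i))
    (hindep : iIndepFun X μ)
    (hdist : ∀ i v, μ {ω | X i ω = v} = ENNReal.ofReal (wt v / ∑ u, wt u))
    (g : V → ℝ) :
    ∀ᵐ ω ∂μ, Tendsto (fun n => (∑ i ∈ Finset.range n, g (X i ω)) / n) atTop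
      (𝓝 (∑ v, (wt v / ∑ u, wt u) * g v)) := by
  have hg : Measurable g := measurable_of_countable g
  have hmap : ∀ i, μ.map (X i) = μ.map (X 0) := by
    intro i
    refine Measure.ext_of_singleton (fun v => ?_)
    rw [Measure.map_apply (hmeas i) (measurableSet_singleton v),
        Measure.map_apply (hmeas 0) (measurableSet_singleton v)]
    have h1 : X i ⁻¹' {v} = {ω | X i ω = v} := by ext ω; simp
    have h2 : X 0 ⁻¹' {v} = {ω | X 0 ω = v} := by ext ω; simp
    rw [h1, h2, hdist i v, hdist 0 v]
  have hident : ∀ i, IdentDistrib (fun ω => g (X i ω)) (fun ω => g (X 0 ω)) μ μ := by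
    intro i
    exact (IdentDistrib.mk (hmeas i).aemeasurable (hmeas 0).aemeasurable (hmap i)).comp hg
  have hpair : Pairwise (Function.onFun (IndepFun · · μ) (fun i ω => g (X i ω))) := by
    intro i j hij
    exact (hindep.indepFun hij).comp hg hg
  have hint : Integrable (fun ω => g (X 0 ω)) μ := by
    refine (integrable_const (∑ v, |g v|)).mono'
      (hg.comp (hmeas 0)).aestronglyMeasurable ?_
    filter_upwards with ω
    simpa using Finset.single_le_sum (f := fun v => |g v|)
      (fun v _ => abs_nonneg _) (Finset.mem_univ (X 0 ω))
  have hexp : (μ[fun ω => g (X 0 ω)]) = ∑ v, (wt v / ∑ u, wt u) * g v := by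
    have : (μ[fun ω => g (X 0 ω)]) = ∫ v, g v ∂(μ.map (X 0)) := by
      rw [integral_map (hmeas 0).aemeasurable hg.aestronglyMeasurable]
    rw [this]
    have : IsProbabilityMeasure (μ.map (X 0)) := Measure.isProbabilityMeasure_map (hmeas 0).aemeasurable
    rw [integral_fintype Integrable.of_finite]
    refine Finset.sum_congr rfl (fun v _ => ?_)
    rw [measureReal_def, Measure.map_apply (hmeas 0) (measurableSet_singleton v)]
    have h2 : X 0 ⁻¹' {v} = {ω | X 0 ω = v} := by ext ω; simp
    rw [h2, hdist 0 v,
      ENNReal.toReal_ofReal (div_nonneg (hwt v).le (Finset.sum_nonneg fun u _ => (hwt u).le)),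
      smul_eq_mul]
  have := strong_law_ae (fun i ω => g (X i ω)) hint hpair hident
  rw [hexp] at this
  filter_upwards [this] with ω hω
  convert hω using 2 with n
  rw [smul_eq_mul, div_eq_inv_mul]

lemma count_AB {V : Type*} [Fintype V] [DecidableEq V] (G : SimpleGraph V) [DecidableRel G.Adj]
    (A B : Finset V) :
    ∑ a ∈ A, (G.neighborFinset a ∩ B).card = ((A ×ˢ B).filter (fun p => G.Adj p.1 p.2)).card := by
  rw [Finset.card_filter, Finset.sum_product]
  refine Finset.sum_congr rfl fun a _ => ?_
  rw [← Finset.card_filter]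
  congr 1
  ext b
  simp [SimpleGraph.mem_neighborFinset, and_comm]

lemma count_BA {V : Type*} [Fintype V] [DecidableEq V] (G : SimpleGraph V) [DecidableRel G.Adj]
    (A B : Finset V) :
    ∑ b ∈ B, (G.neighborFinset b ∩ A).card = ((A ×ˢ B).filter (fun p => G.Adj p.1 p.2)).card := by
  rw [count_AB G B A, Finset.card_filter, Finset.card_filter, Finset.sum_product,
      Finset.sum_product, Finset.sum_comm]
  refine Finset.sum_congr rfl fun a _ => Finset.sum_congr rfl fun b _ => ?_
  simp [G.adj_comm]

theorem wis_star_edge_weight_consistent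
    {V : Type*} [Fintype V] [Nonempty V] [DecidableEq V]
    [MeasurableSpace V] [MeasurableSingletonClass V]
    (G : SimpleGraph V) [DecidableRel G.Adj]
    (wt : V → ℝ) (hwt : ∀ v, 0 < wt v)
    {Ω : Type*} [MeasurableSpace Ω] (μ : Measure Ω) [IsProbabilityMeasure μ]
    (X : ℕ → Ω → V)
    (hmeas : ∀ i, Measurable (X i))
    (hindep : iIndepFun X μ)
    (hdist : ∀ i v, μ {ω | X i ω = v} = ENNReal.ofReal (wt v / ∑ u, wt u))
    (A B : Finset V) (hA : A.Nonempty) (hB : B.Nonempty) (hAB : Disjoint A B) :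
    ∀ ε > (0 : ℝ),
      Tendsto
        (fun n => μ {ω |
          ε < |(∑ i ∈ (Finset.range n).filter (fun i => X i ω ∈ A), ((G.neighborFinset (X i ω) ∩ B).card : ℝ) / wt (X i ω)
                  + ∑ i ∈ (Finset.range n).filter (fun i => X i ω ∈ B), ((G.neighborFinset (X i ω) ∩ A).card : ℝ) / wt (X i ω))
                / ((∑ i ∈ (Finset.range n).filter (fun i => X i ω ∈ A), 1 / wt (X i ω))
                    * ((Fintype.card V : ℝ) * (∑ i ∈ (Finset.range n).filter (fun i => X i ω ∈ B), 1 / wt (X i ω)) / (∑ i ∈ Finset.range n, 1 / wt (X i ω)))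
                  + (∑ i ∈ (Finset.range n).filter (fun i => X i ω ∈ B), 1 / wt (X i ω))
                    * ((Fintype.card V : ℝ) * (∑ i ∈ (Finset.range n).filter (fun i => X i ω ∈ A), 1 / wt (X i ω)) / (∑ i ∈ Finset.range n, 1 / wt (X i ω))))
              - ((((A ×ˢ B).filter (fun p => G.Adj p.1 p.2)).card : ℝ) / ((A.card : ℝ) * (B.card : ℝ)))|})
        atTop (𝓝 0) := by
  intro ε hε
  classical
  have hW : 0 < ∑ u, wt u := Finset.sum_pos (fun v _ => hwt v) Finset.univ_nonempty
  have hN : 0 < (Fintype.card V : ℝ) := by exact_mod_cast Fintype.card_pos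
  have hcA : 0 < (A.card : ℝ) := by exact_mod_cast hA.card_pos
  have hcB : 0 < (B.card : ℝ) := by exact_mod_cast hB.card_pos
  set C : ℝ := ((((A ×ˢ B).filter (fun p => G.Adj p.1 p.2)).card : ℝ)) with hC
  set gE : V → ℝ := fun v => (if v ∈ A then ((G.neighborFinset v ∩ B).card : ℝ) / wt v else 0)
      + (if v ∈ B then ((G.neighborFinset v ∩ A).card : ℝ) / wt v else 0) with hgE
  set gA : V → ℝ := fun v => if v ∈ A then 1 / wt v else 0 with hgA
  set gB : V → ℝ := fun v => if v ∈ B then 1 / wt v else 0 with hgB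
  set gT : V → ℝ := fun v => 1 / wt v with hgT
  -- generic expectation computation
  have hsum_ite : ∀ (s : Finset V) (c : V → ℝ),
      (∑ v, (wt v / ∑ u, wt u) * (if v ∈ s then c v / wt v else 0))
        = (∑ v ∈ s, c v) / (∑ u, wt u) := by
    intro s c
    have h : ∀ v, (wt v / ∑ u, wt u) * (if v ∈ s then c v / wt v else 0)
        = if v ∈ s then c v / (∑ u, wt u) else 0 := by
      intro v
      by_cases h : v ∈ s <;> simp [h]
      rw [div_mul_div_comm, mul_comm (wt v) (c v), mul_div_mul_right _ _ (hwt v).ne']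
    simp_rw [h]
    rw [Finset.sum_ite_mem, Finset.univ_inter, Finset.sum_div]
  have hLE : (∑ v, (wt v / ∑ u, wt u) * gE v) = (C + C) / (∑ u, wt u) := by
    simp only [hgE, mul_add, Finset.sum_add_distrib]
    rw [hsum_ite A (fun v => ((G.neighborFinset v ∩ B).card : ℝ)),
        hsum_ite B (fun v => ((G.neighborFinset v ∩ A).card : ℝ))]
    have e1 : (∑ v ∈ A, ((G.neighborFinset v ∩ B).card : ℝ)) = C := by
      rw [hC]; exact_mod_cast count_AB G A B
    have e2 : (∑ v ∈ B, ((G.neighborFinset v ∩ A).card : ℝ)) = C := by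
      rw [hC]; exact_mod_cast count_BA G A B
    rw [e1, e2, ← add_div]
  have hLA : (∑ v, (wt v / ∑ u, wt u) * gA v) = (A.card : ℝ) / (∑ u, wt u) := by
    simp only [hgA]
    simpa using hsum_ite A (fun _ => (1 : ℝ))
  have hLB : (∑ v, (wt v / ∑ u, wt u) * gB v) = (B.card : ℝ) / (∑ u, wt u) := by
    simp only [hgB]
    simpa using hsum_ite B (fun _ => (1 : ℝ))
  have hLT : (∑ v, (wt v / ∑ u, wt u) * gT v) = (Fintype.card V : ℝ) / (∑ u, wt u) := by
    simp only [hgT]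
    have := hsum_ite Finset.univ (fun _ => (1 : ℝ))
    simpa using this
  have key := fun g => wis_slln wt hwt μ X hmeas hindep hdist g
  -- limits
  set lT : ℝ := (Fintype.card V : ℝ) / (∑ u, wt u) with hlT
  have hlT_ne : lT ≠ 0 := by rw [hlT]; positivity
  set D : ℝ := ((A.card : ℝ) / ∑ u, wt u) * ((Fintype.card V : ℝ) * ((B.card : ℝ) / ∑ u, wt u) / lT)
      + ((B.card : ℝ) / ∑ u, wt u) * ((Fintype.card V : ℝ) * ((A.card : ℝ) / ∑ u, wt u) / lT) with hD
  have hDval : D = 2 * (A.card : ℝ) * (B.card : ℝ) / (∑ u, wt u) := by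
    rw [hD, hlT]
    field_simp
    ring
  have hD_ne : D ≠ 0 := by rw [hDval]; positivity
  have hval : ((C + C) / (∑ u, wt u)) / D = C / ((A.card : ℝ) * (B.card : ℝ)) := by
    rw [hDval]
    field_simp
    ring
  -- a.e. convergence of the estimator
  have hae : ∀ᵐ ω ∂μ, Tendsto (fun n =>
      (∑ i ∈ Finset.range n, gE (X i ω))
        / ((∑ i ∈ Finset.range n, gA (X i ω))
            * ((Fintype.card V : ℝ) * (∑ i ∈ Finset.range n, gB (X i ω)) / (∑ i ∈ Finset.range n, gT (X i ω)))
          + (∑ i ∈ Finset.range n, gB (X i ω))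
            * ((Fintype.card V : ℝ) * (∑ i ∈ Finset.range n, gA (X i ω)) / (∑ i ∈ Finset.range n, gT (X i ω)))))
      atTop (𝓝 (C / ((A.card : ℝ) * (B.card : ℝ)))) := by
    filter_upwards [key gE, key gA, key gB, key gT] with ω hEω hAω hBω hTω
    rw [hLE] at hEω; rw [hLA] at hAω; rw [hLB] at hBω; rw [hLT] at hTω
    set SE : ℕ → ℝ := fun n => ∑ i ∈ Finset.range n, gE (X i ω) with hSE
    set SA : ℕ → ℝ := fun n => ∑ i ∈ Finset.range n, gA (X i ω) with hSA
    set SB : ℕ → ℝ := fun n => ∑ i ∈ Finset.range n, gB (X i ω) with hSB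
    set ST : ℕ → ℝ := fun n => ∑ i ∈ Finset.range n, gT (X i ω) with hST
    have hden : Tendsto (fun n => (SA n / n) * ((Fintype.card V : ℝ) * (SB n / n) / (ST n / n))
        + (SB n / n) * ((Fintype.card V : ℝ) * (SA n / n) / (ST n / n))) atTop (𝓝 D) := by
      rw [hD]
      exact (hAω.mul ((tendsto_const_nhds.mul hBω).div hTω hlT_ne)).add
        (hBω.mul ((tendsto_const_nhds.mul hAω).div hTω hlT_ne))
    have hquot : Tendsto (fun n => (SE n / n) / ((SA n / n) * ((Fintype.card V : ℝ) * (SB n / n) / (ST n / n))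
        + (SB n / n) * ((Fintype.card V : ℝ) * (SA n / n) / (ST n / n)))) atTop
        (𝓝 (((C + C) / (∑ u, wt u)) / D)) := hEω.div hden hD_ne
    rw [hval] at hquot
    refine hquot.congr' ?_
    filter_upwards [eventually_ge_atTop 1] with n hn
    have hn' : ((n : ℝ)) ≠ 0 := by
      have : (0 : ℝ) < n := by exact_mod_cast hn
      exact this.ne'
    have hSTpos : 0 < ST n := by
      refine Finset.sum_pos (fun i _ => ?_) (Finset.nonempty_range_iff.mpr (by omega))
      simp only [hgT]
      exact one_div_pos.mpr (hwt _)
    have e1 : ∀ x y : ℝ, (x / (n : ℝ)) / (y / (n : ℝ)) = x / y := by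
      intro x y
      rcases eq_or_ne y 0 with h | h
      · simp [h]
      · field_simp
    have e2 : (SA n / n) * ((Fintype.card V : ℝ) * (SB n / n) / (ST n / n))
        + (SB n / n) * ((Fintype.card V : ℝ) * (SA n / n) / (ST n / n))
        = (SA n * ((Fintype.card V : ℝ) * SB n / ST n)
            + SB n * ((Fintype.card V : ℝ) * SA n / ST n)) / n := by
      rw [show (Fintype.card V : ℝ) * (SB n / (n:ℝ)) = ((Fintype.card V : ℝ) * SB n) / n from
            (mul_div_assoc _ _ _).symm,
          show (Fintype.card V : ℝ) * (SA n / (n:ℝ)) = ((Fintype.card V : ℝ) * SA n) / n from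
            (mul_div_assoc _ _ _).symm,
          e1 ((Fintype.card V : ℝ) * SB n) (ST n), e1 ((Fintype.card V : ℝ) * SA n) (ST n)]
      ring
    rw [e2, e1]
  -- measurability
  have hSmeas : ∀ (g : V → ℝ) n, Measurable (fun ω => ∑ i ∈ Finset.range n, g (X i ω)) :=
    fun g n => Finset.measurable_sum _ (fun i _ => (measurable_of_countable g).comp (hmeas i))
  have hTIM : TendstoInMeasure μ (fun n ω =>
      (∑ i ∈ Finset.range n, gE (X i ω))
        / ((∑ i ∈ Finset.range n, gA (X i ω))
            * ((Fintype.card V : ℝ) * (∑ i ∈ Finset.range n, gB (X i ω)) / (∑ i ∈ Finset.range n, gT (X i ω)))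
          + (∑ i ∈ Finset.range n, gB (X i ω))
            * ((Fintype.card V : ℝ) * (∑ i ∈ Finset.range n, gA (X i ω)) / (∑ i ∈ Finset.range n, gT (X i ω)))))
      atTop (fun _ => C / ((A.card : ℝ) * (B.card : ℝ))) := by
    refine tendstoInMeasure_of_tendsto_ae (fun n => Measurable.aestronglyMeasurable ?_) hae
    exact ((hSmeas gE n).div (((hSmeas gA n).mul
        ((measurable_const.mul (hSmeas gB n)).div (hSmeas gT n))).add
      ((hSmeas gB n).mul ((measurable_const.mul (hSmeas gA n)).div (hSmeas gT n)))))
  -- rewrite the statement's expression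
  have hFrw : ∀ n (ω : Ω),
      (∑ i ∈ (Finset.range n).filter (fun i => X i ω ∈ A), ((G.neighborFinset (X i ω) ∩ B).card : ℝ) / wt (X i ω)
        + ∑ i ∈ (Finset.range n).filter (fun i => X i ω ∈ B), ((G.neighborFinset (X i ω) ∩ A).card : ℝ) / wt (X i ω))
      / ((∑ i ∈ (Finset.range n).filter (fun i => X i ω ∈ A), 1 / wt (X i ω))
          * ((Fintype.card V : ℝ) * (∑ i ∈ (Finset.range n).filter (fun i => X i ω ∈ B), 1 / wt (X i ω)) / (∑ i ∈ Finset.range n, 1 / wt (X i ω)))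
        + (∑ i ∈ (Finset.range n).filter (fun i => X i ω ∈ B), 1 / wt (X i ω))
          * ((Fintype.card V : ℝ) * (∑ i ∈ (Finset.range n).filter (fun i => X i ω ∈ A), 1 / wt (X i ω)) / (∑ i ∈ Finset.range n, 1 / wt (X i ω))))
      = (∑ i ∈ Finset.range n, gE (X i ω))
        / ((∑ i ∈ Finset.range n, gA (X i ω))
            * ((Fintype.card V : ℝ) * (∑ i ∈ Finset.range n, gB (X i ω)) / (∑ i ∈ Finset.range n, gT (X i ω)))
          + (∑ i ∈ Finset.range n, gB (X i ω))
            * ((Fintype.card V : ℝ) * (∑ i ∈ Finset.range n, gA (X i ω)) / (∑ i ∈ Finset.range n, gT (X i ω)))) := by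
    intro n ω
    simp only [hgE, hgA, hgB, hgT, Finset.sum_filter, Finset.sum_add_distrib]
  refine tendsto_of_tendsto_of_tendsto_of_le_of_le tendsto_const_nhds (hTIM (ENNReal.ofReal ε) (ENNReal.ofReal_pos.mpr hε))
    (fun n => zero_le) (fun n => measure_mono ?_)
  intro ω hω
  simp only [Set.mem_setOf_eq] at hω ⊢
  rw [edist_dist, Real.dist_eq]
  rw [hFrw n ω] at hω
  exact ENNReal.ofReal_le_ofReal hω.le
end
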